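/- arXiv:2401.09379 — 10 statements merged into one kernel-verified Lean document; each statement's English description precedes it below -/
import Mathlib

section
/- Let $\mathcal{C}_1,\dots,\mathcal{C}_K$ be intervals in $\mathbb{R}$ with $\bigcap_{k=1}^K \mathcal{C}_k \neq \varnothing$. Then for every $\tau \in [0,1)$, the set $\mathcal{C}^\tau = \{s \in \mathbb{R} : \frac{1}{K}\sum_{k=1}^K \mathbf{1}\{s \in \mathcal{C}_k\} > \tau\}$ is an interval (i.e., a convex subset of $\mathbb{R}$). -/
open Set

lemma vote_aux {K : ℕ} (C : Fin K → Set ℝ) (hconv : ∀ k, Convex ℝ (C k))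
    {x0 : ℝ} (hx0 : ∀ k, x0 ∈ C k) {s u : ℝ} (hu : u ∈ uIcc s x0) :
    ∑ k, (C k).indicator (fun _ => (1 : ℝ)) s ≤
      ∑ k, (C k).indicator (fun _ => (1 : ℝ)) u := by
  apply Finset.sum_le_sum
  intro k _
  by_cases hs : s ∈ C k
  · have hu' : u ∈ C k := by
      have hseg := (hconv k).segment_subset hs (hx0 k)
      exact hseg (by rwa [segment_eq_uIcc])
    simp [indicator_of_mem, hs, hu']
  · rw [indicator_of_notMem hs]
    exact indicator_nonneg (fun _ _ => zero_le_one) u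

/-- If `K` intervals (convex subsets of `ℝ`) have a common point, then every
voting-threshold level set `C^τ = {s : (1/K) ∑ 1{s ∈ C k} > τ}` is an interval
(a convex subset of `ℝ`). -/
theorem vote_set_is_interval (K : ℕ) (hK : 1 ≤ K) (C : Fin K → Set ℝ)
    (hconv : ∀ k, Convex ℝ (C k))
    (hinter : (⋂ k, C k).Nonempty)
    (τ : ℝ) (hτ0 : 0 ≤ τ) (hτ1 : τ < 1) :
    Convex ℝ {s : ℝ | (1 / K : ℝ) * ∑ k, (C k).indicator (fun _ => (1 : ℝ)) s > τ} := by
  obtain ⟨x0, hx0⟩ := hinter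
  rw [mem_iInter] at hx0
  intro s hs t ht a b ha hb hab
  simp only [mem_setOf_eq, smul_eq_mul] at *
  set u := a * s + b * t with hudef
  have huseg : u ∈ segment ℝ s t := ⟨a, b, ha, hb, hab, rfl⟩
  rw [segment_eq_uIcc, mem_uIcc] at huseg
  have key : (∑ k, (C k).indicator (fun _ => (1 : ℝ)) s ≤
        ∑ k, (C k).indicator (fun _ => (1 : ℝ)) u) ∨
      (∑ k, (C k).indicator (fun _ => (1 : ℝ)) t ≤
        ∑ k, (C k).indicator (fun _ => (1 : ℝ)) u) := by
    rcases le_total u x0 with hux | hux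
    · rcases huseg with ⟨h1, _⟩ | ⟨h1, _⟩
      · exact Or.inl (vote_aux C hconv hx0 (mem_uIcc.mpr (Or.inl ⟨h1, hux⟩)))
      · exact Or.inr (vote_aux C hconv hx0 (mem_uIcc.mpr (Or.inl ⟨h1, hux⟩)))
    · rcases huseg with ⟨_, h2⟩ | ⟨_, h2⟩
      · exact Or.inr (vote_aux C hconv hx0 (mem_uIcc.mpr (Or.inr ⟨hux, h2⟩)))
      · exact Or.inl (vote_aux C hconv hx0 (mem_uIcc.mpr (Or.inr ⟨hux, h2⟩)))
  have hKpos : (0 : ℝ) ≤ 1 / K := by positivity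
  rcases key with h | h
  · exact lt_of_lt_of_le hs (mul_le_mul_of_nonneg_left h hKpos)
  · exact lt_of_lt_of_le ht (mul_le_mul_of_nonneg_left h hKpos)
end

section
/- Let $\mathcal{C}_1,\dots,\mathcal{C}_K$ be closed intervals in $\mathbb{R}$ all of the same width $\delta > 0$, with midpoints $c_1,\dots,c_K$, and suppose $K$ is odd. If a point $s$ belongs to strictly more than $K/2$ of the intervals, then $s$ belongs to the interval whose midpoint is the median $c_{(\lceil K/2 \rceil)}$ of the midpoints. Consequently, the majority vote set $\mathcal{C}^M$ is contained in the interval $[c_{(\lceil K/2 \rceil)} - \delta/2,\ c_{(\lceil K/2 \rceil)} + \delta/2]$. -/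
/-!
An interval of radius `r` around `c k` misses `s` as soon as `c k` lies more than `r` to one side
of `s`. So if `s` lies in a majority of the intervals, fewer than half of the midpoints are below
`s - r` and fewer than half are above `s + r`; hence the median midpoint can lie neither below
`s - r` nor above `s + r`.
-/

open Set Finset

/-- The `⌈K/2⌉`-th smallest value (1-indexed) among `c 0, …, c (K-1)`. -/
noncomputable def medianOf {K : ℕ} (c : Fin K → ℝ) : ℝ :=
  (Multiset.sort (Multiset.ofList (List.ofFn c)) (· ≤ ·)).getD ((K + 1) / 2 - 1) 0

namespace List

variable {α : Type*} [LinearOrder α] {l : List α} {i : ℕ}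

theorem SortedLE.le_getElem_of_countP_lt_le (hl : l.SortedLE) (hi : i < l.length) {a : α}
    (h : l.countP (· < a) ≤ i) : a ≤ l[i] := by
  by_contra! hlt
  have hprefix : ∀ x ∈ l.take (i + 1), x < a := by
    intro x hx
    obtain ⟨j, hj, rfl⟩ := mem_take_iff_getElem.mp hx
    exact (hl.getElem_le_getElem_of_le (by omega)).trans_lt hlt
  have hle := (take_sublist (i + 1) l).countP_le (p := (· < a))
  rw [countP_eq_length.mpr (by simpa using hprefix), length_take] at hle
  omega

theorem SortedLE.getElem_le_of_countP_gt_add_lt (hl : l.SortedLE) (hi : i < l.length) {b : α}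
    (h : l.countP (b < ·) + i < l.length) : l[i] ≤ b := by
  by_contra! hlt
  have hsuffix : ∀ x ∈ l.drop i, b < x := by
    intro x hx
    obtain ⟨j, hj, rfl⟩ := mem_drop_iff_getElem.mp hx
    exact hlt.trans_le (hl.getElem_le_getElem_of_le (by omega))
  have hle := (drop_sublist i l).countP_le (p := (b < ·))
  rw [countP_eq_length.mpr (by simpa using hsuffix), length_drop] at hle
  omega

end List

theorem Finset.two_mul_card_filter_lt_of_imp_not {ι : Type*} [Fintype ι] {p q : ι → Prop}
    [DecidablePred p] [DecidablePred q] (hpq : ∀ i, p i → ¬q i)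
    (hq : Fintype.card ι < 2 * #{i | q i}) : 2 * #{i | p i} < Fintype.card ι := by
  have hp : #{i | p i} ≤ #{i | ¬q i} := card_le_card (monotone_filter_right _ fun i _ => hpq i)
  have hpart := card_filter_add_card_filter_not (s := univ) fun i => q i
  rw [card_univ] at hpart
  omega

theorem Finset.sum_indicator_one_eq_card {ι α M : Type*} [Fintype ι] [AddCommMonoidWithOne M]
    (C : ι → Set α) (s : α) [DecidablePred (s ∈ C ·)] :
    ∑ k, (C k).indicator (fun _ => (1 : M)) s = #{k | s ∈ C k} := by
  simp only [indicator_apply, sum_boole]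

section Median

variable {K : ℕ} (c : Fin K → ℝ)

/-- The list `c_(1) ≤ ⋯ ≤ c_(K)` of order statistics. -/
noncomputable def sortedValues : List ℝ :=
  Multiset.sort (List.ofFn c : Multiset ℝ) (· ≤ ·)

theorem sortedLE_sortedValues : (sortedValues c).SortedLE :=
  (Multiset.pairwise_sort _ _).sortedLE

theorem length_sortedValues : (sortedValues c).length = K := by
  simp [sortedValues]

theorem countP_sortedValues (p : ℝ → Prop) [DecidablePred p] :
    (sortedValues c).countP (fun x => decide (p x)) = #{k | p (c k)} := by
  rw [sortedValues, ← Multiset.coe_countP, Multiset.sort_eq, ← Fin.univ_val_map,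
    Multiset.countP_map]
  rfl

theorem medianOf_eq_getElem (h : (K + 1) / 2 - 1 < (sortedValues c).length) :
    medianOf c = (sortedValues c)[(K + 1) / 2 - 1] :=
  List.getD_eq_getElem _ _ h

theorem le_medianOf_of_two_mul_card_lt {a : ℝ} (h : 2 * #{k | c k < a} < K) :
    a ≤ medianOf c := by
  have hi : (K + 1) / 2 - 1 < (sortedValues c).length := by rw [length_sortedValues]; omega
  rw [medianOf_eq_getElem c hi]
  exact (sortedLE_sortedValues c).le_getElem_of_countP_lt_le hi
    (by rw [countP_sortedValues]; omega)

theorem medianOf_le_of_two_mul_card_lt {b : ℝ} (h : 2 * #{k | b < c k} < K) :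
    medianOf c ≤ b := by
  have hi : (K + 1) / 2 - 1 < (sortedValues c).length := by rw [length_sortedValues]; omega
  rw [medianOf_eq_getElem c hi]
  exact (sortedLE_sortedValues c).getElem_le_of_countP_gt_add_lt hi
    (by rw [countP_sortedValues, length_sortedValues]; omega)

theorem medianOf_mem_Icc_of_two_mul_card_lt {r s : ℝ}
    (h : K < 2 * #{k | s ∈ Icc (c k - r) (c k + r)}) :
    s ∈ Icc (medianOf c - r) (medianOf c + r) := by
  replace h := (Fintype.card_fin K).trans_lt h
  have below : s - r ≤ medianOf c :=
    le_medianOf_of_two_mul_card_lt c <| by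
      simpa using two_mul_card_filter_lt_of_imp_not
        (fun k (hk : c k < s - r) (hs : s ∈ Icc (c k - r) (c k + r)) => by linarith [hs.2]) h
  have above : medianOf c ≤ s + r :=
    medianOf_le_of_two_mul_card_lt c <| by
      simpa using two_mul_card_filter_lt_of_imp_not
        (fun k (hk : s + r < c k) (hs : s ∈ Icc (c k - r) (c k + r)) => by linarith [hs.1]) h
  constructor <;> linarith

end Median

theorem median_of_midpoints_general (K : ℕ)
    (δ : ℝ) (c : Fin K → ℝ)
    (C : Fin K → Set ℝ) (hC : ∀ k, C k = Set.Icc (c k - δ / 2) (c k + δ / 2)) :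
    (∀ s : ℝ, (K : ℝ) / 2 < ∑ k, (C k).indicator (fun _ => (1 : ℝ)) s →
      s ∈ Set.Icc (medianOf c - δ / 2) (medianOf c + δ / 2)) ∧
    {s : ℝ | (1 / K : ℝ) * ∑ k, (C k).indicator (fun _ => (1 : ℝ)) s > 1 / 2} ⊆
      Set.Icc (medianOf c - δ / 2) (medianOf c + δ / 2) := by
  classical
  have majority : ∀ s : ℝ, (K : ℝ) / 2 < ∑ k, (C k).indicator (fun _ => (1 : ℝ)) s →
      s ∈ Set.Icc (medianOf c - δ / 2) (medianOf c + δ / 2) := by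
    intro s hs
    rw [sum_indicator_one_eq_card] at hs
    apply medianOf_mem_Icc_of_two_mul_card_lt
    simp only [← hC]
    exact_mod_cast (by linarith : (K : ℝ) < 2 * (#{k | s ∈ C k} : ℕ))
  refine ⟨majority, fun s hs => majority s ?_⟩
  rcases K.eq_zero_or_pos with rfl | hK
  · norm_num at hs
  · rw [mem_ofPred_eq, gt_iff_lt, one_div_mul_eq_div, lt_div_iff₀ (by positivity)] at hs
    linarith

/-- Median of midpoints: for an odd number `K` of closed intervals of common width `δ`
with midpoints `c k`, any point belonging to strictly more than `K/2` of the intervals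
lies in the interval centered at the median midpoint; consequently the majority vote
set is contained in that interval. -/
theorem median_of_midpoints (K : ℕ) (hodd : Odd K)
    (δ : ℝ) (hδ : 0 < δ) (c : Fin K → ℝ)
    (C : Fin K → Set ℝ) (hC : ∀ k, C k = Set.Icc (c k - δ / 2) (c k + δ / 2)) :
    (∀ s : ℝ, (K : ℝ) / 2 < ∑ k, (C k).indicator (fun _ => (1 : ℝ)) s →
      s ∈ Set.Icc (medianOf c - δ / 2) (medianOf c + δ / 2)) ∧
    {s : ℝ | (1 / K : ℝ) * ∑ k, (C k).indicator (fun _ => (1 : ℝ)) s > 1 / 2} ⊆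
      Set.Icc (medianOf c - δ / 2) (medianOf c + δ / 2) :=
  median_of_midpoints_general K δ c C hC
end

section
/- Let $\mathcal{C}_1,\dots,\mathcal{C}_K$ be bounded intervals in $\mathbb{R}$ and let $\tau \in [1/2, 1)$. Then the Lebesgue measure of $\mathcal{C}^\tau = \{s : \frac{1}{K}\sum_{k=1}^K \mathbf{1}\{s \in \mathcal{C}_k\} > \tau\}$ is at most $\max_{1 \le k \le K} \lambda(\mathcal{C}_k)$, where $\lambda$ denotes Lebesgue measure. -/
open MeasureTheory

/-- For bounded intervals `C k` in `ℝ` and any threshold `τ ∈ [1/2, 1)`, the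
Lebesgue measure of the vote set `C^τ` is at most the largest measure of an
input interval. -/
theorem vote_set_length_le_max (K : ℕ) (hK : 1 ≤ K)
    (C : Fin K → Set ℝ)
    (hconv : ∀ k, Convex ℝ (C k))
    (hbdd : ∀ k, Bornology.IsBounded (C k))
    (τ : ℝ) (hτ0 : (1 : ℝ) / 2 ≤ τ) (hτ1 : τ < 1) :
    volume {s : ℝ | (1 / K : ℝ) * ∑ k, (C k).indicator (fun _ => (1 : ℝ)) s > τ} ≤
      ⨆ k, volume (C k) := by
  classical
  set V := {s : ℝ | (1 / K : ℝ) * ∑ k, (C k).indicator (fun _ => (1 : ℝ)) s > τ} with hV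
  have hKpos : (0 : ℝ) < K := by exact_mod_cast hK
  have count : ∀ u ∈ V, ((K : ℝ) / 2) <
      ((Finset.univ.filter (fun k => u ∈ C k)).card : ℝ) := by
    intro u hu
    have h : τ < (1 / K : ℝ) * ∑ k, (C k).indicator (fun _ => (1 : ℝ)) u := hu
    have hsum : ∑ k, (C k).indicator (fun _ => (1 : ℝ)) u =
        ((Finset.univ.filter (fun k => u ∈ C k)).card : ℝ) := by
      simp [Set.indicator_apply]
    rw [hsum, one_div, inv_mul_eq_div, lt_div_iff₀ hKpos] at h
    nlinarith [h, hτ0, hKpos]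
  have key : ∀ s ∈ V, ∀ t ∈ V, edist s t ≤ ⨆ k, volume (C k) := by
    intro s hs t ht
    set A := Finset.univ.filter (fun k => s ∈ C k) with hA
    set B := Finset.univ.filter (fun k => t ∈ C k) with hB
    have hcardA := count s hs
    have hcardB := count t ht
    have hABcard : K < A.card + B.card := by
      have : (K : ℝ) < (A.card : ℝ) + (B.card : ℝ) := by linarith
      exact_mod_cast this
    have hne : (A ∩ B).Nonempty := by
      rw [← Finset.card_pos]
      have hunion : (A ∪ B).card ≤ K := by
        simpa using Finset.card_le_card (Finset.subset_univ (A ∪ B))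
      have := Finset.card_union_add_card_inter A B
      omega
    obtain ⟨k, hk⟩ := hne
    have hsk : s ∈ C k := by
      have := (Finset.mem_inter.mp hk).1
      simpa [hA] using this
    have htk : t ∈ C k := by
      have := (Finset.mem_inter.mp hk).2
      simpa [hB] using this
    have hsub : Set.uIcc s t ⊆ C k :=
      ((hconv k).ordConnected).uIcc_subset hsk htk
    have hvol : edist s t ≤ volume (C k) := by
      calc edist s t = ENNReal.ofReal (dist s t) := (edist_dist s t)
        _ = volume (Set.uIcc s t) := by
            rw [Real.volume_interval, Real.dist_eq, abs_sub_comm]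
        _ ≤ volume (C k) := measure_mono hsub
    exact hvol.trans (le_iSup (fun k => volume (C k)) k)
  calc volume V ≤ EMetric.diam V := Real.volume_le_diam V
    _ ≤ ⨆ k, volume (C k) := EMetric.diam_le key
end

section
/- Let $X$ be a Poisson-binomial random variable, the sum of $K$ independent Bernoulli random variables with parameters $p_1,\dots,p_K \in [0,1]$, and let $Y \sim \mathrm{Binomial}(K,p)$. If $p^K \le \prod_{k=1}^K p_k$, then $X$ is stochastically larger than $Y$, i.e., $\mathbb{P}(X \ge t) \ge \mathbb{P}(Y \ge t)$ for every $t$. -/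
/-!
Conditioning on two of the trials, the tail `P(X ≥ m)` depends on their success probabilities
`a, b` only through `a * b` and `a + b - a * b`, and increases in both. If some `p i < q`, then
some other `p j ≥ q` because `∏ p ≥ q ^ K`; replacing `(p j, p i)` by `(q, p i * p j / q)` keeps
the product and lowers `a + b - a * b` (as `(p j - q) * (q - p i) ≥ 0`), so it lowers the tails,
and induction on the number of trials, with the new trial of probability `q` split off, finishes.
If all `p i ≥ q`, the tails simply increase in each parameter.
-/

open MeasureTheory ProbabilityTheory

lemma List.exists_le_of_pow_le_mul_prod {l : List ℝ} {b q : ℝ} (hl : ∀ x ∈ l, 0 ≤ x)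
    (hb : 0 ≤ b) (hbq : b < q) (h : q ^ (l.length + 1) ≤ b * l.prod) : ∃ a ∈ l, q ≤ a := by
  by_contra! hlt
  have hprod : l.prod ≤ q ^ l.length := by
    simpa using List.prod_map_le_prod_map₀ id (fun _ => q) hl fun x hx => (hlt x hx).le
  have hq : 0 < q ^ l.length := pow_pos (hb.trans_lt hbq) _
  rw [pow_succ'] at h
  nlinarith [mul_le_mul_of_nonneg_left hprod hb]

/-- `poissonBinomialTail l m` is `P(X ≥ m)` for `X` a sum of independent Bernoulli trials with
success probabilities `l`, computed by conditioning on the first trial. -/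
def poissonBinomialTail : List ℝ → ℕ → ℝ
  | [], m => if m = 0 then 1 else 0
  | a :: l, m => a * poissonBinomialTail l (m - 1) + (1 - a) * poissonBinomialTail l m

namespace poissonBinomialTail

variable {l : List ℝ}

lemma nil (m : ℕ) : poissonBinomialTail [] m = if m = 0 then 1 else 0 := rfl

lemma cons (a : ℝ) (l : List ℝ) (m : ℕ) :
    poissonBinomialTail (a :: l) m =
      a * poissonBinomialTail l (m - 1) + (1 - a) * poissonBinomialTail l m := rfl

lemma zero (l : List ℝ) : poissonBinomialTail l 0 = 1 := by
  induction l with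
  | nil => rfl
  | cons a l ih => rw [cons, Nat.zero_sub, ih]; ring

lemma nonneg (hl : ∀ x ∈ l, x ∈ Set.Icc (0 : ℝ) 1) (m : ℕ) : 0 ≤ poissonBinomialTail l m := by
  induction l generalizing m with
  | nil => rw [nil]; split <;> norm_num
  | cons a l ih =>
    obtain ⟨ha0, ha1⟩ := hl a List.mem_cons_self
    have ih' := ih (fun x hx => hl x (List.mem_cons_of_mem a hx))
    rw [cons]
    nlinarith [ih' (m - 1), ih' m]

lemma antitone (hl : ∀ x ∈ l, x ∈ Set.Icc (0 : ℝ) 1) : Antitone (poissonBinomialTail l) := by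
  induction l with
  | nil =>
    refine antitone_nat_of_succ_le fun m => ?_
    simp only [nil, m.succ_ne_zero, if_false]
    split_ifs <;> norm_num
  | cons a l ih =>
    obtain ⟨ha0, ha1⟩ := hl a List.mem_cons_self
    have ih' := ih (fun x hx => hl x (List.mem_cons_of_mem a hx))
    intro m n hmn
    simp only [cons]
    nlinarith [ih' (Nat.sub_le_sub_right hmn 1), ih' hmn]

lemma perm {l l' : List ℝ} (h : l.Perm l') : poissonBinomialTail l = poissonBinomialTail l' := by
  induction h with
  | nil => rfl
  | cons a _ ih => funext m; rw [cons, cons, ih]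
  | swap a b l => funext m; simp only [cons]; ring
  | trans _ _ ih₁ ih₂ => rw [ih₁, ih₂]

lemma cons_le_cons {a b : ℝ} {l' : List ℝ} (hl : ∀ x ∈ l, x ∈ Set.Icc (0 : ℝ) 1)
    (hb0 : 0 ≤ b) (hba : b ≤ a) (ha1 : a ≤ 1)
    (h : ∀ m, poissonBinomialTail l' m ≤ poissonBinomialTail l m) (m : ℕ) :
    poissonBinomialTail (b :: l') m ≤ poissonBinomialTail (a :: l) m := by
  rw [cons, cons]
  nlinarith [h (m - 1), h m, antitone hl (Nat.sub_le m 1)]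

/-- `a + b - a * b` is the probability that at least one of the two trials succeeds. -/
lemma pair_le {a b a' b' : ℝ} (hl : ∀ x ∈ l, x ∈ Set.Icc (0 : ℝ) 1)
    (hprod : a' * b' ≤ a * b) (hsum : a' + b' - a' * b' ≤ a + b - a * b) (m : ℕ) :
    poissonBinomialTail (a' :: b' :: l) m ≤ poissonBinomialTail (a :: b :: l) m := by
  simp only [cons]
  have h₁ := antitone hl (Nat.sub_le (m - 1) 1)
  have h₂ := antitone hl (Nat.sub_le m 1)
  nlinarith [mul_nonneg (sub_nonneg.2 hprod) (sub_nonneg.2 h₁),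
    mul_nonneg (sub_nonneg.2 hsum) (sub_nonneg.2 h₂)]

lemma replicate_le_of_forall_le {q : ℝ} (hq0 : 0 ≤ q) (hl : ∀ x ∈ l, x ∈ Set.Icc q 1) (m : ℕ) :
    poissonBinomialTail (List.replicate l.length q) m ≤ poissonBinomialTail l m := by
  induction l generalizing m with
  | nil => rfl
  | cons a l ih =>
    have hl' : ∀ x ∈ l, x ∈ Set.Icc q 1 := fun x hx => hl x (List.mem_cons_of_mem a hx)
    obtain ⟨hqa, ha1⟩ := hl a List.mem_cons_self
    exact cons_le_cons (fun x hx => ⟨hq0.trans (hl' x hx).1, (hl' x hx).2⟩) hq0 hqa ha1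
      (ih hl') m

lemma exists_perm_cons_cons {l : List ℝ} {b q : ℝ} (hl : ∀ x ∈ l, 0 ≤ x)
    (hprod : q ^ l.length ≤ l.prod) (hb : b ∈ l) (hbq : b < q) :
    ∃ a l₂, l.Perm (a :: b :: l₂) ∧ q ≤ a := by
  have hperm := List.perm_cons_erase hb
  obtain ⟨a, ha, hqa⟩ : ∃ a ∈ l.erase b, q ≤ a := by
    refine List.exists_le_of_pow_le_mul_prod (fun x hx => hl x (List.mem_of_mem_erase hx))
      (hl b hb) hbq ?_
    rwa [← hperm.prod_eq.trans (List.prod_cons ..), ← List.length_cons, ← hperm.length_eq]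
  exact ⟨a, _, hperm.trans (((List.perm_cons_erase ha).cons b).trans (.swap a b _)), hqa⟩

theorem replicate_le {q : ℝ} (hq0 : 0 ≤ q) (hq1 : q ≤ 1) {l : List ℝ}
    (hl : ∀ x ∈ l, x ∈ Set.Icc (0 : ℝ) 1) (hprod : q ^ l.length ≤ l.prod) (m : ℕ) :
    poissonBinomialTail (List.replicate l.length q) m ≤ poissonBinomialTail l m := by
  obtain ⟨n, hn⟩ : ∃ n, l.length = n := ⟨_, rfl⟩
  induction n generalizing l m with
  | zero => rw [hn, List.length_eq_zero_iff.1 hn]; rfl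
  | succ n ih =>
    by_cases hall : ∀ x ∈ l, q ≤ x
    · exact replicate_le_of_forall_le hq0 (fun x hx => ⟨hall x hx, (hl x hx).2⟩) m
    push Not at hall
    obtain ⟨b, hb, hbq⟩ := hall
    obtain ⟨a, l₂, hperm, hqa⟩ := exists_perm_cons_cons (fun x hx => (hl x hx).1) hprod hb hbq
    have hmem : ∀ x ∈ a :: b :: l₂, x ∈ Set.Icc (0 : ℝ) 1 :=
      fun x hx => hl x (hperm.symm.subset hx)
    have hl₂ : ∀ x ∈ l₂, x ∈ Set.Icc (0 : ℝ) 1 := fun x hx => hmem x (by simp [hx])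
    obtain ⟨ha0, ha1⟩ := hmem a (by simp)
    obtain ⟨hb0, -⟩ := hl b hb
    have hq : 0 < q := hb0.trans_lt hbq
    have hlen : l₂.length + 1 = n := by simpa [hn] using hperm.length_eq.symm
    -- Exchange `(a, b)` for `(q, c)`: the product is kept, and `q + c ≤ a + b` since
    -- `(a - q) * (q - b) ≥ 0`.
    set c := a * b / q
    have hqc : q * c = a * b := mul_div_cancel₀ _ hq.ne'
    have hc : c ∈ Set.Icc (0 : ℝ) 1 := ⟨by positivity, (div_le_one hq).2 (by nlinarith)⟩
    have hsum : q + c ≤ a + b :=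
      le_of_mul_le_mul_left (by nlinarith [mul_nonneg (sub_nonneg.2 hqa) (sub_nonneg.2 hbq.le)]) hq
    have hcl₂ : ∀ x ∈ c :: l₂, x ∈ Set.Icc (0 : ℝ) 1 := by
      simpa only [List.mem_cons, forall_eq_or_imp] using ⟨hc, hl₂⟩
    have hprod' : q ^ (c :: l₂).length ≤ (c :: l₂).prod := by
      refine le_of_mul_le_mul_left ?_ hq
      rw [List.length_cons, hlen, ← pow_succ', List.prod_cons, ← mul_assoc, hqc, ← hn]
      simpa [hperm.prod_eq, mul_assoc] using hprod
    have hih : ∀ m, poissonBinomialTail (List.replicate n q) m ≤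
        poissonBinomialTail (c :: l₂) m := by
      intro m
      simpa [hlen] using ih hcl₂ hprod' m (by simpa using hlen)
    calc poissonBinomialTail (List.replicate l.length q) m
        = poissonBinomialTail (q :: List.replicate n q) m := by rw [hn]; rfl
      _ ≤ poissonBinomialTail (q :: c :: l₂) m := cons_le_cons hcl₂ hq0 le_rfl hq1 hih m
      _ ≤ poissonBinomialTail (a :: b :: l₂) m := pair_le hl₂ hqc.le (by linarith) m
      _ = poissonBinomialTail l m := by rw [perm hperm]

end poissonBinomialTail

section Binomial

variable (q : ℝ)

def binomialTerm (n j : ℕ) : ℝ := n.choose j * q ^ j * (1 - q) ^ (n - j)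

def binomialTail (n m : ℕ) : ℝ :=
  ∑ j ∈ Finset.range (n + 1), if m ≤ j then binomialTerm q n j else 0

lemma binomialTerm_succ_succ (n j : ℕ) :
    binomialTerm q (n + 1) (j + 1) =
      q * binomialTerm q n j + (1 - q) * binomialTerm q n (j + 1) := by
  simp only [binomialTerm, Nat.choose_succ_succ', Nat.cast_add, Nat.add_sub_add_right]
  rcases lt_or_ge j n with hjn | hnj
  · rw [show n - j = n - (j + 1) + 1 by omega]
    ring
  · rw [Nat.choose_eq_zero_of_lt (Nat.lt_succ_of_le hnj)]
    ring

lemma binomialTail_zero (n : ℕ) : binomialTail q n 0 = 1 := by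
  have h := add_pow q (1 - q) n
  rw [add_sub_cancel, one_pow] at h
  rw [h, binomialTail]
  refine Finset.sum_congr rfl fun j _ => ?_
  rw [if_pos j.zero_le, binomialTerm]
  ring

lemma binomialTail_succ_succ (n m : ℕ) :
    binomialTail q (n + 1) (m + 1) =
      q * binomialTail q n m + (1 - q) * binomialTail q n (m + 1) := by
  have hshift : binomialTail q n (m + 1) =
      ∑ i ∈ Finset.range (n + 1), if m ≤ i then binomialTerm q n (i + 1) else 0 := by
    rw [binomialTail, Finset.sum_range_succ', Finset.sum_range_succ]
    simp [binomialTerm, Nat.choose_succ_self]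
  rw [binomialTail, Finset.sum_range_succ', hshift, binomialTail, Finset.mul_sum, Finset.mul_sum,
    ← Finset.sum_add_distrib]
  rw [if_neg (Nat.not_succ_le_zero m), add_zero]
  refine Finset.sum_congr rfl fun i _ => ?_
  split_ifs <;> simp_all [binomialTerm_succ_succ]

lemma binomialTail_succ (n m : ℕ) :
    binomialTail q (n + 1) m = q * binomialTail q n (m - 1) + (1 - q) * binomialTail q n m := by
  cases m with
  | zero => simp only [Nat.zero_sub, binomialTail_zero]; ring
  | succ m => exact binomialTail_succ_succ q n m

lemma poissonBinomialTail_replicate (n m : ℕ) :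
    poissonBinomialTail (List.replicate n q) m = binomialTail q n m := by
  induction n generalizing m with
  | zero => simp [poissonBinomialTail.nil, binomialTail, binomialTerm]
  | succ n ih => rw [List.replicate_succ, poissonBinomialTail.cons, ih, ih, binomialTail_succ]

end Binomial

section Bernoulli

variable {Ω : Type*} [MeasurableSpace Ω] {μ : Measure Ω}

lemma measure_le_add_of_indepFun {B S : Ω → ℕ} (hB : Measurable B) (hS : Measurable S)
    (hind : IndepFun S B μ) (hB01 : ∀ ω, B ω = 0 ∨ B ω = 1) (m : ℕ) :
    μ {ω | m ≤ B ω + S ω} =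
      μ {ω | m - 1 ≤ S ω} * μ {ω | B ω = 1} + μ {ω | m ≤ S ω} * μ {ω | B ω = 0} := by
  have hsplit : {ω | m ≤ B ω + S ω} =
      (S ⁻¹' {x | m - 1 ≤ x} ∩ B ⁻¹' {1}) ∪ (S ⁻¹' {x | m ≤ x} ∩ B ⁻¹' {0}) := by
    ext ω
    simp only [Set.mem_ofPred_eq, Set.mem_union, Set.mem_inter_iff, Set.mem_preimage,
      Set.mem_singleton_iff]
    rcases hB01 ω with h | h <;> rw [h] <;> omega
  have hdisj : Disjoint (S ⁻¹' {x | m - 1 ≤ x} ∩ B ⁻¹' {1}) (S ⁻¹' {x | m ≤ x} ∩ B ⁻¹' {0}) :=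
    Set.disjoint_left.2 fun ω h₁ h₀ => by simp_all
  rw [hsplit, measure_union hdisj ((hS .of_discrete).inter (hB .of_discrete)),
    hind.measure_inter_preimage_eq_mul _ _ .of_discrete .of_discrete,
    hind.measure_inter_preimage_eq_mul _ _ .of_discrete .of_discrete]
  rfl

lemma measure_setOf_eq_zero_eq_ofReal_one_sub [IsProbabilityMeasure μ] {B : Ω → ℕ}
    (hB : Measurable B) (hB01 : ∀ ω, B ω = 0 ∨ B ω = 1) {a : ℝ} (ha : 0 ≤ a)
    (h1 : μ {ω | B ω = 1} = ENNReal.ofReal a) :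
    μ {ω | B ω = 0} = ENNReal.ofReal (1 - a) := by
  have hcompl : {ω | B ω = 0} = {ω | B ω = 1}ᶜ := by
    ext ω
    rcases hB01 ω with h | h <;> simp [h]
  have hB1 : MeasurableSet {ω | B ω = 1} := hB (.singleton 1)
  rw [hcompl, measure_compl hB1 (measure_ne_top μ _), h1, measure_univ,
    ENNReal.ofReal_sub 1 ha, ENNReal.ofReal_one]

variable [IsProbabilityMeasure μ] {ι : Type*} {φ : ι → Ω → ℕ} {p : ι → ℝ}

theorem measure_le_sum_eq_poissonBinomialTail [DecidableEq ι] (hmeas : ∀ k, Measurable (φ k))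
    (h01 : ∀ k ω, φ k ω = 0 ∨ φ k ω = 1) (hindep : iIndepFun φ μ)
    (hp : ∀ k, p k ∈ Set.Icc (0 : ℝ) 1) (hparam : ∀ k, μ {ω | φ k ω = 1} = ENNReal.ofReal (p k))
    (s : Finset ι) (m : ℕ) :
    μ {ω | m ≤ ∑ k ∈ s, φ k ω} = ENNReal.ofReal (poissonBinomialTail (s.toList.map p) m) := by
  induction s using Finset.induction_on generalizing m with
  | empty =>
    rcases m with _ | m
    · simp [poissonBinomialTail.zero]
    · simp [poissonBinomialTail.nil]
  | @insert j s hj ih =>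
    have hl : ∀ x ∈ s.toList.map p, x ∈ Set.Icc (0 : ℝ) 1 := by
      simpa using fun k _ => hp k
    obtain ⟨hp0, hp1⟩ := hp j
    have hS : Measurable fun ω => ∑ k ∈ s, φ k ω := Finset.measurable_sum s fun k _ => hmeas k
    have hind : IndepFun (fun ω => ∑ k ∈ s, φ k ω) (φ j) μ := by
      simpa only [Finset.sum_fn] using hindep.indepFun_finsetSum_of_notMem hmeas hj
    simp only [Finset.sum_insert hj]
    rw [measure_le_add_of_indepFun (hmeas j) hS hind (h01 j), ih, ih, hparam,
      measure_setOf_eq_zero_eq_ofReal_one_sub (hmeas j) (h01 j) hp0 (hparam j),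
      poissonBinomialTail.perm ((Finset.toList_insert hj).map p), List.map_cons,
      poissonBinomialTail.cons,
      ENNReal.ofReal_add (mul_nonneg hp0 (poissonBinomialTail.nonneg hl (m - 1)))
        (mul_nonneg (sub_nonneg.2 hp1) (poissonBinomialTail.nonneg hl m)),
      ENNReal.ofReal_mul hp0, ENNReal.ofReal_mul (sub_nonneg.2 hp1)]
    ring

end Bernoulli

theorem poisson_binomial_stoch_dominates_binomial_general {Ω : Type*} [MeasurableSpace Ω]
    (μ : Measure Ω) [IsProbabilityMeasure μ]
    (K : ℕ)
    (p : Fin K → ℝ) (hp0 : ∀ k, 0 ≤ p k) (hp1 : ∀ k, p k ≤ 1)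
    (q : ℝ) (hq0 : 0 ≤ q) (hq1 : q ≤ 1)
    (φ : Fin K → Ω → ℕ)
    (hmeas : ∀ k, Measurable (φ k))
    (h01 : ∀ k ω, φ k ω = 0 ∨ φ k ω = 1)
    (hindep : iIndepFun φ μ)
    (hparam : ∀ k, μ {ω | φ k ω = 1} = ENNReal.ofReal (p k))
    (hdom : q ^ K ≤ ∏ k, p k) :
    ∀ t : ℝ,
      ENNReal.ofReal (∑ j ∈ Finset.range (K + 1),
          if t ≤ (j : ℝ) then (K.choose j : ℝ) * q ^ j * (1 - q) ^ (K - j) else 0) ≤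
        μ {ω | t ≤ ((∑ k, φ k ω : ℕ) : ℝ)} := by
  intro t
  have hceil : ∀ j : ℕ, t ≤ j ↔ ⌈t⌉₊ ≤ j := fun j => Nat.ceil_le.symm
  have hl : ∀ x ∈ Finset.univ.toList.map p, x ∈ Set.Icc (0 : ℝ) 1 := by simp [hp0, hp1]
  have hlen : (Finset.univ.toList.map p).length = K := by simp
  simp only [hceil]
  rw [measure_le_sum_eq_poissonBinomialTail hmeas h01 hindep (fun k => ⟨hp0 k, hp1 k⟩) hparam]
  refine ENNReal.ofReal_le_ofReal ?_
  change binomialTail q K ⌈t⌉₊ ≤ _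
  simpa only [hlen, poissonBinomialTail_replicate] using
    poissonBinomialTail.replicate_le hq0 hq1 hl (by rwa [hlen, Finset.prod_map_toList]) ⌈t⌉₊

/-- Boland–Proschan stochastic dominance: a Poisson-binomial random variable
`X = ∑ φ k` (sum of independent Bernoullis with parameters `p k`) stochastically
dominates a `Binomial(K, p)` random variable whenever `p^K ≤ ∏ p k`; i.e.,
`P(X ≥ t) ≥ P(Binomial(K,p) ≥ t)` for every real `t`, where the latter probability
is the explicit binomial tail sum. -/
theorem poisson_binomial_stoch_dominates_binomial {Ω : Type*} [MeasurableSpace Ω]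
    (μ : Measure Ω) [IsProbabilityMeasure μ]
    (K : ℕ) (hK : 1 ≤ K)
    (p : Fin K → ℝ) (hp0 : ∀ k, 0 ≤ p k) (hp1 : ∀ k, p k ≤ 1)
    (q : ℝ) (hq0 : 0 ≤ q) (hq1 : q ≤ 1)
    (φ : Fin K → Ω → ℕ)
    (hmeas : ∀ k, Measurable (φ k))
    (h01 : ∀ k ω, φ k ω = 0 ∨ φ k ω = 1)
    (hindep : iIndepFun φ μ)
    (hparam : ∀ k, μ {ω | φ k ω = 1} = ENNReal.ofReal (p k))
    (hdom : q ^ K ≤ ∏ k, p k) :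
    ∀ t : ℝ,
      ENNReal.ofReal (∑ j ∈ Finset.range (K + 1),
          if t ≤ (j : ℝ) then (K.choose j : ℝ) * q ^ j * (1 - q) ^ (K - j) else 0) ≤
        μ {ω | t ≤ ((∑ k, φ k ω : ℕ) : ℝ)} :=
  poisson_binomial_stoch_dominates_binomial_general μ K p hp0 hp1 q hq0 hq1 φ hmeas h01 hindep
    hparam hdom
end

section
/- Let $\phi_1,\phi_2,\dots,\phi_K$ be exchangeable Bernoulli random variables with $\mathbb{E}[\phi_1] \le \alpha$. Then $\mathbb{P}\left(\exists\, k \le K : \frac{1}{k}\sum_{j=1}^k \phi_j \ge \frac{1}{2}\right) \le 2\alpha$. -/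
/-!
Write `Y m = runningMean m` for the mean of the first `m + 1` coordinates and
`E n = crossingFrom c n` for the event that some `Y m` with `m ≥ n` reaches `c`. The complement
of `E (n + 1)` is symmetric in the first `n + 2` coordinates, so by exchangeability `Y n` and
`Y (n + 1)` have the same integral over it. Hence `∫_{(E n)ᶜ} Y n - c P(E 0 \ E n)` does not
decrease with `n`: the step from `n` to `n + 1` adds the points whose last crossing is at `n`,
where `Y n ≥ c`. It is nonnegative at `n = 0`, and since `E K = ∅` it ends at
`E[Y (K - 1)] - c P(E 0) = E[x i] - c P(E 0)` for every coordinate `x i`.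
-/

open MeasureTheory Finset

namespace ExchangeableMarkov

variable {K : ℕ}

def Exchangeable (ν : Measure (Fin K → ℝ)) : Prop :=
  ∀ e : Equiv.Perm (Fin K), ν.map (fun x => x ∘ e) = ν

noncomputable def runningMean (m : ℕ) (x : Fin K → ℝ) : ℝ :=
  ((m : ℝ) + 1)⁻¹ * ∑ j ∈ univ.filter (fun j : Fin K => (j : ℕ) ≤ m), x j

def crossingFrom (c : ℝ) (n : ℕ) : Set (Fin K → ℝ) :=
  {x | ∃ j : Fin K, n ≤ (j : ℕ) ∧ c ≤ runningMean j x}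

lemma measurable_comp_perm (e : Equiv.Perm (Fin K)) : Measurable fun x : Fin K → ℝ => x ∘ e :=
  measurable_pi_lambda _ fun k => measurable_pi_apply (e k)

lemma card_filter_val_le {m : ℕ} (hm : m < K) :
    #(univ.filter (fun j : Fin K => (j : ℕ) ≤ m)) = m + 1 := by
  have : univ.filter (fun j : Fin K => (j : ℕ) ≤ m) = Iic ⟨m, hm⟩ := by
    ext j; simp [Fin.le_def]
  rw [this, Fin.card_Iic]

lemma measurable_runningMean (m : ℕ) : Measurable (runningMean (K := K) m) :=
  (Finset.measurable_sum _ fun j _ => measurable_pi_apply j).const_mul _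

lemma measurableSet_crossingFrom (c : ℝ) (n : ℕ) :
    MeasurableSet (crossingFrom (K := K) c n) := by
  have : crossingFrom (K := K) c n =
      ⋃ j : Fin K, ⋃ _ : n ≤ (j : ℕ), {x | c ≤ runningMean j x} := by
    ext x; simp [crossingFrom]
  rw [this]
  exact .iUnion fun j => .iUnion fun _ =>
    measurableSet_le measurable_const (measurable_runningMean _)

lemma antitone_crossingFrom (c : ℝ) : Antitone (crossingFrom (K := K) c) :=
  fun _ _ hnn' _ ⟨j, hj, hc⟩ => ⟨j, hnn'.trans hj, hc⟩

lemma crossingFrom_of_le (c : ℝ) {n : ℕ} (hn : K ≤ n) : crossingFrom (K := K) c n = ∅ :=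
  Set.eq_empty_of_forall_notMem fun _ ⟨j, hj, _⟩ => by omega

lemma le_runningMean_of_mem_diff {c : ℝ} {n : ℕ} {x : Fin K → ℝ}
    (hx : x ∈ crossingFrom c n \ crossingFrom c (n + 1)) : c ≤ runningMean n x := by
  obtain ⟨⟨j, hj, hc⟩, hx⟩ := hx
  obtain rfl : (j : ℕ) = n := by
    by_contra hne
    exact hx ⟨j, by omega, hc⟩
  exact hc

lemma runningMean_comp_swap {m : ℕ} {i j : Fin K} (hi : (i : ℕ) ≤ m) (hj : (j : ℕ) ≤ m)
    (x : Fin K → ℝ) : runningMean m (x ∘ Equiv.swap i j) = runningMean m x := by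
  unfold runningMean
  congr 1
  refine Equiv.Perm.sum_comp _ _ x fun a ha => ?_
  have : a = i ∨ a = j := by
    by_contra! h
    exact ha (Equiv.swap_apply_of_ne_of_ne h.1 h.2)
  rcases this with rfl | rfl <;> simpa

lemma preimage_crossingFrom_swap (c : ℝ) {n : ℕ} {i j : Fin K} (hi : (i : ℕ) ≤ n)
    (hj : (j : ℕ) ≤ n) :
    (fun x => x ∘ Equiv.swap i j) ⁻¹' crossingFrom c n = crossingFrom c n := by
  ext x
  simp only [crossingFrom, Set.mem_preimage, Set.mem_ofPred_eq]
  exact exists_congr fun k => and_congr_right fun hk => by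
    rw [runningMean_comp_swap (by omega) (by omega)]

variable {ν : Measure (Fin K → ℝ)}

lemma Exchangeable.setIntegral_eval_eq (hν : Exchangeable ν) {s : Set (Fin K → ℝ)}
    (hs : MeasurableSet s) {i j : Fin K}
    (hsij : (fun x => x ∘ Equiv.swap i j) ⁻¹' s = s) :
    ∫ x in s, x j ∂ν = ∫ x in s, x i ∂ν := by
  conv_lhs => rw [← hν (Equiv.swap i j)]
  rw [setIntegral_map hs (measurable_pi_apply j).aestronglyMeasurable
    (measurable_comp_perm _).aemeasurable, hsij]
  simp

lemma Exchangeable.setIntegral_runningMean (hν : Exchangeable ν)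
    (hint : ∀ i, Integrable (fun x => x i) ν) {s : Set (Fin K → ℝ)} (hs : MeasurableSet s)
    {m : ℕ} (hm : m < K) (i : Fin K)
    (hsym : ∀ j : Fin K, (j : ℕ) ≤ m → (fun x => x ∘ Equiv.swap i j) ⁻¹' s = s) :
    ∫ x in s, runningMean m x ∂ν = ∫ x in s, x i ∂ν := by
  have hsum : ∫ x in s, ∑ j ∈ univ.filter (fun j : Fin K => (j : ℕ) ≤ m), x j ∂ν =
      (m + 1) * ∫ x in s, x i ∂ν := by
    rw [integral_finsetSum _ fun j _ => (hint j).integrableOn,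
      Finset.sum_congr rfl fun j hj => hν.setIntegral_eval_eq hs (hsym j (by simpa using hj)),
      sum_const, card_filter_val_le hm, nsmul_eq_mul]
    push_cast; ring
  unfold runningMean
  rw [integral_const_mul, hsum, ← mul_assoc, inv_mul_cancel₀ (by positivity), one_mul]

lemma runningMean_nonneg_ae (hnonneg : ∀ i, 0 ≤ᵐ[ν] fun x => x i) (m : ℕ) :
    0 ≤ᵐ[ν] runningMean m := by
  filter_upwards [ae_all_iff.2 hnonneg] with x hx
  exact mul_nonneg (by positivity) (sum_nonneg fun j _ => hx j)

lemma integrable_runningMean (hint : ∀ i, Integrable (fun x => x i) ν) (m : ℕ) :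
    Integrable (runningMean m) ν :=
  (integrable_finsetSum _ fun j _ => hint j).const_mul _

lemma mul_measureReal_diff_crossingFrom_succ_le [IsFiniteMeasure ν]
    (hint : ∀ i, Integrable (fun x => x i) ν) (c : ℝ) (n : ℕ)
    (h : c * ν.real (crossingFrom c 0 \ crossingFrom c n) ≤
      ∫ x in (crossingFrom c n)ᶜ, runningMean n x ∂ν) :
    c * ν.real (crossingFrom c 0 \ crossingFrom c (n + 1)) ≤
      ∫ x in (crossingFrom c (n + 1))ᶜ, runningMean n x ∂ν := by
  set D := crossingFrom c n \ crossingFrom (K := K) c (n + 1)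
  have hD : MeasurableSet D :=
    (measurableSet_crossingFrom c n).diff (measurableSet_crossingFrom c (n + 1))
  have hsub := antitone_crossingFrom (K := K) c n.le_succ
  have hsub₀ := antitone_crossingFrom (K := K) c n.zero_le
  have hmeasure : ν.real (crossingFrom c 0 \ crossingFrom c (n + 1)) =
      ν.real (crossingFrom c 0 \ crossingFrom c n) + ν.real D := by
    rw [← Set.sdiff_union_sdiff_cancel hsub₀ hsub]
    exact measureReal_union (Set.disjoint_sdiff_left.mono_right Set.sdiff_subset) hD
  have hintegral : ∫ x in (crossingFrom c (n + 1))ᶜ, runningMean n x ∂ν =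
      ∫ x in (crossingFrom c n)ᶜ, runningMean n x ∂ν +
        ∫ x in D, runningMean n x ∂ν := by
    rw [Set.compl_eq_univ_sdiff, Set.compl_eq_univ_sdiff,
      ← Set.sdiff_union_sdiff_cancel (Set.subset_univ _) hsub]
    exact setIntegral_union (Set.disjoint_sdiff_left.mono_right Set.sdiff_subset) hD
      (integrable_runningMean hint n).integrableOn (integrable_runningMean hint n).integrableOn
  have hcD : c * ν.real D ≤ ∫ x in D, runningMean n x ∂ν :=
    setIntegral_ge_of_const_le_real hD (measure_ne_top ν D)
      (fun _ hx => le_runningMean_of_mem_diff hx) (integrable_runningMean hint n).integrableOn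
  rw [hmeasure, hintegral, mul_add]
  exact add_le_add h hcD

theorem Exchangeable.mul_measureReal_crossingFrom_zero_le [IsFiniteMeasure ν]
    (hν : Exchangeable ν) (hint : ∀ i, Integrable (fun x => x i) ν)
    (hnonneg : ∀ i, 0 ≤ᵐ[ν] fun x => x i) (c : ℝ) (i : Fin K) :
    c * ν.real (crossingFrom c 0) ≤ ∫ x, x i ∂ν := by
  have key : ∀ n < K, c * ν.real (crossingFrom c 0 \ crossingFrom c n) ≤
      ∫ x in (crossingFrom c n)ᶜ, runningMean n x ∂ν := by
    intro n hn
    induction n with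
    | zero =>
      simpa using setIntegral_nonneg_of_ae (runningMean_nonneg_ae hnonneg 0)
    | succ n ih =>
      have h := mul_measureReal_diff_crossingFrom_succ_le hint c n (ih (by omega))
      have hmean m (hm : m ≤ n + 1) :=
        hν.setIntegral_runningMean hint (measurableSet_crossingFrom c (n + 1)).compl (m := m)
          (by omega) ⟨n + 1, hn⟩ fun j hj => by
            rw [Set.preimage_compl, preimage_crossingFrom_swap (n := n + 1) c le_rfl (by omega)]
      rwa [hmean n (by omega), ← hmean (n + 1) le_rfl] at h
  have hK : K - 1 + 1 = K := Nat.sub_add_cancel (Nat.one_le_of_lt i.isLt)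
  have h := mul_measureReal_diff_crossingFrom_succ_le hint c (K - 1) (key (K - 1) (by omega))
  rwa [hK, crossingFrom_of_le c le_rfl, Set.sdiff_empty, Set.compl_empty,
    hν.setIntegral_runningMean hint .univ (by omega) i fun _ _ => Set.preimage_univ,
    setIntegral_univ] at h

end ExchangeableMarkov

open ExchangeableMarkov in
theorem exchangeable_running_majority_general {Ω : Type*} [MeasurableSpace Ω]
    (μ : Measure Ω) [IsProbabilityMeasure μ]
    (K : ℕ) (hK : 2 ≤ K) (α : ℝ)
    (φ : Fin K → Ω → ℝ)
    (hmeas : ∀ k, Measurable (φ k))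
    (h01 : ∀ k ω, φ k ω = 0 ∨ φ k ω = 1)
    (hexch : ∀ e : Equiv.Perm (Fin K),
      Measure.map (fun ω (k : Fin K) => φ (e k) ω) μ =
        Measure.map (fun ω (k : Fin K) => φ k ω) μ)
    (hexp : ∀ k, ∫ ω, φ k ω ∂μ ≤ α) :
    μ {ω | ∃ k : Fin K,
        (1 : ℝ) / 2 ≤ ((k : ℕ) + 1 : ℝ)⁻¹ *
          ∑ j ∈ Finset.univ.filter (fun j => j ≤ k), φ j ω} ≤
      ENNReal.ofReal (2 * α) := by
  set V : Ω → Fin K → ℝ := fun ω k => φ k ω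
  have hV : Measurable V := measurable_pi_lambda _ hmeas
  set ν := μ.map V
  have : IsProbabilityMeasure ν := Measure.isProbabilityMeasure_map hV.aemeasurable
  have hν : Exchangeable ν := fun e => by
    rw [Measure.map_map (measurable_comp_perm e) hV]
    exact hexch e
  have hbound i ω : ‖φ i ω‖ ≤ 1 ∧ 0 ≤ φ i ω := by rcases h01 i ω with h | h <;> simp [h]
  have hint i : Integrable (fun x => x i) ν :=
    (integrable_map_measure (measurable_pi_apply i).aestronglyMeasurable hV.aemeasurable).2 <|
      Integrable.of_bound (hmeas i).aestronglyMeasurable 1 (.of_forall fun ω => (hbound i ω).1)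
  have hnonneg i : 0 ≤ᵐ[ν] fun x => x i :=
    (ae_map_iff hV.aemeasurable (measurableSet_le measurable_const (measurable_pi_apply i))).2 <|
      .of_forall fun ω => (hbound i ω).2
  have hmean : ∫ x, x ⟨0, by omega⟩ ∂ν ≤ α := by
    rw [integral_map hV.aemeasurable (measurable_pi_apply _).aestronglyMeasurable]
    exact hexp _
  have h := (hν.mul_measureReal_crossingFrom_zero_le hint hnonneg (1 / 2) _).trans hmean
  have hset : {ω | ∃ k : Fin K, (1 : ℝ) / 2 ≤ ((k : ℕ) + 1 : ℝ)⁻¹ *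
      ∑ j ∈ Finset.univ.filter (fun j => j ≤ k), φ j ω} =
        V ⁻¹' crossingFrom (1 / 2) 0 := by
    ext ω
    simp [crossingFrom, runningMean, V]
  rw [hset, ← Measure.map_apply hV (measurableSet_crossingFrom _ _), ← ofReal_measureReal]
  exact ENNReal.ofReal_le_ofReal (by linarith)

/-- Exchangeable Markov inequality for running majority vote: if `φ 0, …, φ (K-1)`
are exchangeable Bernoulli random variables with mean at most `α`, then the
probability that some running average `(1/k) ∑_{j<k} φ j` reaches `1/2` is at
most `2α`. -/
theorem exchangeable_running_majority {Ω : Type*} [MeasurableSpace Ω]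
    (μ : Measure Ω) [IsProbabilityMeasure μ]
    (K : ℕ) (hK : 2 ≤ K) (α : ℝ) (hα0 : 0 ≤ α) (hα1 : α ≤ 1)
    (φ : Fin K → Ω → ℝ)
    (hmeas : ∀ k, Measurable (φ k))
    (h01 : ∀ k ω, φ k ω = 0 ∨ φ k ω = 1)
    (hexch : ∀ e : Equiv.Perm (Fin K),
      Measure.map (fun ω (k : Fin K) => φ (e k) ω) μ =
        Measure.map (fun ω (k : Fin K) => φ k ω) μ)
    (hexp : ∀ k, ∫ ω, φ k ω ∂μ ≤ α) :
    μ {ω | ∃ k : Fin K,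
        (1 : ℝ) / 2 ≤ ((k : ℕ) + 1 : ℝ)⁻¹ *
          ∑ j ∈ Finset.univ.filter (fun j => j ≤ k), φ j ω} ≤
      ENNReal.ofReal (2 * α) :=
  exchangeable_running_majority_general μ K hK α φ hmeas h01 hexch hexp
end

section
/- Let $\phi_1,\dots,\phi_K$ be arbitrarily dependent Bernoulli random variables with $\mathbb{E}[\phi_k] \le \alpha_k$ for each $k$, let $w_1,\dots,w_K \ge 0$ with $\sum_k w_k = 1$, and let $U \sim \mathrm{Unif}(0,1)$ be independent of the $\phi_k$. Then $\mathbb{P}\left(\sum_{k=1}^K w_k \phi_k \ge \frac{1-U}{2}\right) \le 2\sum_{k=1}^K w_k \alpha_k$. -/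
open MeasureTheory ProbabilityTheory

/-!
The event is `1 - U ≤ 2 S` with `S = ∑ k, w k * φ k ≥ 0`. As `U` is uniform on `[0, 1]` and
independent of `S`, conditionally on `S = s` this has probability at most `2 s`; integrating over
`s` bounds it by `2 𝔼[S] ≤ 2 ∑ k, w k * α k` (the uniformly randomized Markov inequality).
-/

lemma volume_restrict_Icc_setOf_one_sub_le (x : ℝ) :
    volume.restrict (Set.Icc (0 : ℝ) 1) {u | 1 - u ≤ x} ≤ ENNReal.ofReal x := by
  have hset : {u : ℝ | 1 - u ≤ x} = Set.Ici (1 - x) := by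
    ext u
    simp only [Set.mem_ofPred_eq, Set.mem_Ici]
    constructor <;> intro h <;> linarith
  rw [hset, Measure.restrict_apply measurableSet_Ici]
  calc volume (Set.Ici (1 - x) ∩ Set.Icc 0 1)
      ≤ volume (Set.Icc (1 - x) 1) := measure_mono fun u ⟨hu, _, hu1⟩ => ⟨hu, hu1⟩
    _ = ENNReal.ofReal x := by rw [Real.volume_Icc, sub_sub_cancel]

section RandomizedMarkov

variable {Ω : Type*} [MeasurableSpace Ω] {μ : Measure Ω}

theorem measure_one_sub_le_le_lintegral_ofReal [IsFiniteMeasure μ] {X U : Ω → ℝ}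
    (hX : Measurable X) (hU : Measurable U)
    (hUunif : μ.map U = volume.restrict (Set.Icc (0 : ℝ) 1)) (hindep : IndepFun X U μ) :
    μ {ω | 1 - U ω ≤ X ω} ≤ ∫⁻ ω, ENNReal.ofReal (X ω) ∂μ := by
  have hE : MeasurableSet {p : ℝ × ℝ | 1 - p.2 ≤ p.1} :=
    measurableSet_le (measurable_const.sub measurable_snd) measurable_fst
  have hmap := (indepFun_iff_map_prod_eq_prod_map_map hX.aemeasurable hU.aemeasurable).mp hindep
  calc μ {ω | 1 - U ω ≤ X ω}
      = (μ.map X).prod (μ.map U) {p | 1 - p.2 ≤ p.1} := by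
        rw [← hmap, Measure.map_apply (hX.prodMk hU) hE]
        rfl
    _ = ∫⁻ x, volume.restrict (Set.Icc (0 : ℝ) 1) {u | 1 - u ≤ x} ∂(μ.map X) := by
        rw [hUunif, Measure.prod_apply hE]
        rfl
    _ ≤ ∫⁻ x, ENNReal.ofReal x ∂(μ.map X) :=
        lintegral_mono volume_restrict_Icc_setOf_one_sub_le
    _ = ∫⁻ ω, ENNReal.ofReal (X ω) ∂μ := lintegral_map ENNReal.measurable_ofReal hX

lemma integrable_of_forall_eq_zero_or_eq_one [IsFiniteMeasure μ] {f : Ω → ℝ}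
    (hf : Measurable f) (h01 : ∀ ω, f ω = 0 ∨ f ω = 1) : Integrable f μ :=
  .of_bound hf.aestronglyMeasurable 1 (.of_forall fun ω => by rcases h01 ω with h | h <;> simp [h])

lemma integral_weighted_sum_le {ι : Type*} [Fintype ι] {w α : ι → ℝ} {φ : ι → Ω → ℝ}
    (hw : ∀ k, 0 ≤ w k) (hφ : ∀ k, Integrable (φ k) μ) (hexp : ∀ k, ∫ ω, φ k ω ∂μ ≤ α k) :
    ∫ ω, ∑ k, w k * φ k ω ∂μ ≤ ∑ k, w k * α k := by
  rw [integral_finsetSum _ fun k _ => (hφ k).const_mul (w k)]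
  gcongr with k
  rw [integral_const_mul]
  exact mul_le_mul_of_nonneg_left (hexp k) (hw k)

end RandomizedMarkov

theorem randomized_weighted_majority_general {Ω : Type*} [MeasurableSpace Ω]
    (μ : Measure Ω) [IsProbabilityMeasure μ]
    (K : ℕ)
    (α : Fin K → ℝ)
    (w : Fin K → ℝ) (hw0 : ∀ k, 0 ≤ w k)
    (φ : Fin K → Ω → ℝ)
    (hmeas : ∀ k, Measurable (φ k))
    (h01 : ∀ k ω, φ k ω = 0 ∨ φ k ω = 1)
    (hexp : ∀ k, ∫ ω, φ k ω ∂μ ≤ α k)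
    (U : Ω → ℝ) (hU : Measurable U)
    (hUunif : μ.map U = (volume.restrict (Set.Icc (0 : ℝ) 1)))
    (hindep : IndepFun U (fun ω (k : Fin K) => φ k ω) μ) :
    μ {ω | ∑ k, w k * φ k ω ≥ (1 - U ω) / 2} ≤
      ENNReal.ofReal (2 * ∑ k, w k * α k) := by
  set S : Ω → ℝ := fun ω => ∑ k, w k * φ k ω
  have hint : ∀ k, Integrable (φ k) μ :=
    fun k => integrable_of_forall_eq_zero_or_eq_one (hmeas k) (h01 k)
  have hS_nonneg : ∀ ω, 0 ≤ S ω := fun ω =>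
    Finset.sum_nonneg fun k _ => mul_nonneg (hw0 k) (by rcases h01 k ω with h | h <;> simp [h])
  have hindep2S : IndepFun (fun ω => 2 * S ω) U μ :=
    (hindep.comp measurable_id
      (by fun_prop : Measurable fun v : Fin K → ℝ => 2 * ∑ k, w k * v k)).symm
  have hset : {ω | S ω ≥ (1 - U ω) / 2} = {ω | 1 - U ω ≤ 2 * S ω} := by
    ext ω
    simp only [Set.mem_ofPred_eq, ge_iff_le]
    constructor <;> intro h <;> linarith
  calc μ {ω | S ω ≥ (1 - U ω) / 2}
      = μ {ω | 1 - U ω ≤ 2 * S ω} := by rw [hset]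
    _ ≤ ∫⁻ ω, ENNReal.ofReal (2 * S ω) ∂μ :=
        measure_one_sub_le_le_lintegral_ofReal (by fun_prop) hU hUunif hindep2S
    _ = ENNReal.ofReal (∫ ω, 2 * S ω ∂μ) :=
        (ofReal_integral_eq_lintegral_ofReal
          ((integrable_finsetSum _ fun k _ => (hint k).const_mul (w k)).const_mul 2)
          (.of_forall fun ω => by simp only [Pi.zero_apply]; linarith [hS_nonneg ω])).symm
    _ ≤ ENNReal.ofReal (2 * ∑ k, w k * α k) := by
        rw [integral_const_mul]
        gcongr
        exact integral_weighted_sum_le hw0 hint hexp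

/-- Randomized weighted majority vote: for arbitrarily dependent Bernoulli random
variables `φ k` with means at most `α k`, weights `w` summing to 1, and an
independent uniform `U` on `[0,1]`,
`P(∑ w k * φ k ≥ (1 - U)/2) ≤ 2 ∑ w k * α k`. -/
theorem randomized_weighted_majority {Ω : Type*} [MeasurableSpace Ω]
    (μ : Measure Ω) [IsProbabilityMeasure μ]
    (K : ℕ) (hK : 2 ≤ K)
    (α : Fin K → ℝ) (hα0 : ∀ k, 0 ≤ α k) (hα1 : ∀ k, α k ≤ 1)
    (w : Fin K → ℝ) (hw0 : ∀ k, 0 ≤ w k) (hw1 : ∑ k, w k = 1)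
    (φ : Fin K → Ω → ℝ)
    (hmeas : ∀ k, Measurable (φ k))
    (h01 : ∀ k ω, φ k ω = 0 ∨ φ k ω = 1)
    (hexp : ∀ k, ∫ ω, φ k ω ∂μ ≤ α k)
    (U : Ω → ℝ) (hU : Measurable U)
    (hUunif : μ.map U = (volume.restrict (Set.Icc (0 : ℝ) 1)))
    (hindep : IndepFun U (fun ω (k : Fin K) => φ k ω) μ) :
    μ {ω | ∑ k, w k * φ k ω ≥ (1 - U ω) / 2} ≤
      ENNReal.ofReal (2 * ∑ k, w k * α k) :=
  randomized_weighted_majority_general μ K α w hw0 φ hmeas h01 hexp U hU hUunif hindep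
end

section
/- Let $X$ be a nonnegative random variable and $U \sim \mathrm{Unif}(0,1)$ independent of $X$. Then for any $a > 0$, $\mathbb{P}(X \ge Ua) \le \mathbb{E}[X]/a$. -/
open MeasureTheory ProbabilityTheory

/-- Uniformly-randomized Markov inequality: for a nonnegative integrable random
variable `X` and an independent uniform `U` on `[0,1]`, and any `a > 0`,
`P(X ≥ U a) ≤ E[X]/a`. -/
theorem uniformly_randomized_markov {Ω : Type*} [MeasurableSpace Ω]
    (μ : Measure Ω) [IsProbabilityMeasure μ]
    (X : Ω → ℝ) (hXmeas : Measurable X) (hXnn : ∀ ω, 0 ≤ X ω)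
    (hXint : Integrable X μ)
    (U : Ω → ℝ) (hU : Measurable U)
    (hUunif : μ.map U = (volume.restrict (Set.Icc (0 : ℝ) 1)))
    (hindep : IndepFun U X μ)
    (a : ℝ) (ha : 0 < a) :
    μ {ω | X ω ≥ U ω * a} ≤ ENNReal.ofReal ((∫ ω, X ω ∂μ) / a) := by
  have hpair : μ.map (fun ω => (X ω, U ω)) = (μ.map X).prod (μ.map U) :=
    (indepFun_iff_map_prod_eq_prod_map_map hXmeas.aemeasurable hU.aemeasurable).mp hindep.symm
  have hS : MeasurableSet {p : ℝ × ℝ | p.2 * a ≤ p.1} :=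
    measurableSet_le (measurable_snd.mul_const a) measurable_fst
  have h1 : μ {ω | X ω ≥ U ω * a} = ((μ.map X).prod (μ.map U)) {p : ℝ × ℝ | p.2 * a ≤ p.1} := by
    rw [← hpair, Measure.map_apply (hXmeas.prodMk hU) hS]
    rfl
  rw [h1, hUunif, Measure.prod_apply hS]
  have hslice : ∀ x : ℝ, (volume.restrict (Set.Icc (0:ℝ) 1)) {u : ℝ | u * a ≤ x}
      ≤ ENNReal.ofReal (x / a) := by
    intro x
    rw [Measure.restrict_apply (measurableSet_le (measurable_id'.mul_const a) measurable_const)]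
    calc volume ({u : ℝ | u * a ≤ x} ∩ Set.Icc 0 1)
        ≤ volume (Set.Icc 0 (x / a)) := by
          apply measure_mono
          rintro u ⟨hu1, hu2, _⟩
          exact ⟨hu2, (le_div_iff₀ ha).mpr hu1⟩
      _ = ENNReal.ofReal (x / a) := by rw [Real.volume_Icc]; simp
  calc ∫⁻ x, (volume.restrict (Set.Icc (0:ℝ) 1)) (Prod.mk x ⁻¹' {p : ℝ × ℝ | p.2 * a ≤ p.1}) ∂(μ.map X)
      ≤ ∫⁻ x, ENNReal.ofReal (x / a) ∂(μ.map X) := lintegral_mono fun x => hslice x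
    _ = ∫⁻ ω, ENNReal.ofReal (X ω / a) ∂μ :=
        lintegral_map (by measurability) hXmeas
    _ = ENNReal.ofReal (∫ ω, X ω / a ∂μ) :=
        (ofReal_integral_eq_lintegral_ofReal (hXint.div_const a)
          (ae_of_all _ fun ω => div_nonneg (hXnn ω) ha.le)).symm
    _ = ENNReal.ofReal ((∫ ω, X ω ∂μ) / a) := by rw [integral_div]
end

section
/- Let $\hat\mu_1, \hat\mu_2, \dots$ be exchangeable real-valued estimators of $\mu$ such that $\mathbb{P}(|\hat\mu_k - \mu| \ge \epsilon) \le \beta$ for each $k$, where $\epsilon > 0$ and $\beta \in [0,1]$. For each $K$, let $m_K$ denote the median of $\hat\mu_1,\dots,\hat\mu_K$. Then $\mathbb{P}(\exists K \ge 1 : |m_K - \mu| \ge \epsilon) \le 2\beta$. -/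
/-!
Let `φₖ` be the indicator that the `k`-th estimate misses `μ₀` by at least `ε`. If the median of
the first `K` estimates misses, then at least half of them miss, i.e. the running average of the
`φₖ` reaches `1/2`. A cyclic form of the maximal ergodic lemma shows that among the `N`
rotations of any nonnegative sequence `x₀, …, x_{N-1}`, at most `(x₀ + ⋯ + x_{N-1}) / c` have a
prefix of average at least `c`. Exchangeability makes all rotations equally likely, so averaging
over them gives `c · P(some running average of the φₖ reaches c) ≤ sup_k E φₖ ≤ β`
(the exchangeable Markov inequality), and `c = 1/2` yields the bound `2β`.
-/

open MeasureTheory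

open Finset
open scoped ENNReal

section MaximalLemma

variable {α G : Type*} [AddCommGroup G] [LinearOrder G] [IsOrderedAddMonoid G]

/- Cyclic maximal ergodic lemma, by Garsia's argument: `M a = max_{0 ≤ n ≤ N} Sₙ a` satisfies
`M a ≤ f a + M (σ a)` on the filtered set and `M a = 0` off it, while `∑ M = ∑ M ∘ σ`. -/
theorem Equiv.Perm.sum_filter_exists_birkhoffSum_nonneg (σ : Equiv.Perm α) {s : Finset α}
    (hs : {a | σ a ≠ a} ⊆ s) (f : α → G) (N : ℕ) :
    0 ≤ ∑ a ∈ s with ∃ n ∈ Icc (1 : ℕ) N, 0 ≤ birkhoffSum σ f n a, f a := by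
  set E := {a ∈ s | ∃ n ∈ Icc (1 : ℕ) N, 0 ≤ birkhoffSum σ f n a}
  let M : α → G := fun a ↦ (range (N + 1)).sup' nonempty_range_add_one (birkhoffSum σ f · a)
  have hM_nonneg (a : α) : 0 ≤ M a :=
    le_sup'_of_le _ (mem_range.2 N.succ_pos) (birkhoffSum_zero σ f a).ge
  have hS_le (a : α) {n : ℕ} (hn : n ∈ Icc 1 N) : birkhoffSum σ f n a ≤ f a + M (σ a) := by
    obtain ⟨m, rfl⟩ : ∃ m, n = m + 1 := ⟨n - 1, by grind⟩
    rw [birkhoffSum_succ']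
    gcongr
    exact le_sup' (birkhoffSum σ f · (σ a)) (by grind)
  have hM_le {a : α} (ha : a ∈ E) : M a ≤ f a + M (σ a) := by
    obtain ⟨n₀, hn₀, hS⟩ := (mem_filter.1 ha).2
    refine sup'_le _ _ fun n hn ↦ ?_
    rcases n with _ | n
    · exact (birkhoffSum_zero σ f a).trans_le (hS.trans (hS_le a hn₀))
    · exact hS_le a (by grind)
  have hM_eq_zero {a : α} (hE : ¬∃ n ∈ Icc (1 : ℕ) N, 0 ≤ birkhoffSum σ f n a) : M a = 0 := by
    refine le_antisymm (sup'_le _ _ fun n hn ↦ ?_) (hM_nonneg a)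
    rcases n with _ | n
    · exact (birkhoffSum_zero σ f a).le
    · push Not at hE
      exact (hE _ (by grind)).le
  calc 0 = ∑ a ∈ s, M a - ∑ a ∈ s, M (σ a) := by rw [σ.sum_comp s M hs, sub_self]
    _ ≤ ∑ a ∈ E, M a - ∑ a ∈ E, M (σ a) := by
      have hME : ∑ a ∈ E, M a = ∑ a ∈ s, M a :=
        sum_filter_of_ne fun a _ h ↦ by_contra fun hE ↦ h (hM_eq_zero hE)
      rw [hME]
      gcongr
      · exact fun a _ _ ↦ hM_nonneg _
      · exact filter_subset _ _
    _ ≤ ∑ a ∈ E, f a := by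
      rw [← sum_sub_distrib]
      exact sum_le_sum fun a ha ↦ sub_le_iff_le_add.2 (hM_le ha)

theorem Equiv.Perm.card_filter_nsmul_le_sum (σ : Equiv.Perm α) {s : Finset α}
    (hs : {a | σ a ≠ a} ⊆ s) {x : α → G} (hx : ∀ a ∈ s, 0 ≤ x a) (c : G) (N : ℕ) :
    #{a ∈ s | ∃ n ∈ Icc (1 : ℕ) N, n • c ≤ birkhoffSum σ x n a} • c ≤ ∑ a ∈ s, x a := by
  have key := σ.sum_filter_exists_birkhoffSum_nonneg hs (fun a ↦ x a - c) N
  have hshift (n : ℕ) (a : α) :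
      birkhoffSum σ (fun a ↦ x a - c) n a = birkhoffSum σ x n a - n • c := by
    simp [birkhoffSum, sum_sub_distrib]
  simp only [hshift, sub_nonneg, sum_sub_distrib, sum_const] at key
  exact key.trans (sum_le_sum_of_subset_of_nonneg (filter_subset _ _) fun a ha _ ↦ hx a ha)

end MaximalLemma

section Rotation

namespace List

theorem formPerm_range_apply_of_le {N m : ℕ} (hm : N ≤ m) : (range N).formPerm m = m :=
  formPerm_apply_of_notMem (by simpa using hm)

theorem formPerm_range_pow_apply_zero {N k : ℕ} (hk : k < N) :
    ((range N).formPerm ^ k) 0 = k := by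
  induction k with
  | zero => rfl
  | succ k ih =>
    have hstep := formPerm_apply_getElem (range N) nodup_range k (by simp; omega)
    simp only [getElem_range, length_range, Nat.mod_eq_of_lt hk] at hstep
    rw [pow_succ', Equiv.Perm.mul_apply, ih (by omega), hstep]

theorem formPerm_range_pow_apply_comm {N j k : ℕ} (hj : j < N) (hk : k < N) :
    ((range N).formPerm ^ j) k = ((range N).formPerm ^ k) j :=
  calc ((range N).formPerm ^ j) k = ((range N).formPerm ^ j) (((range N).formPerm ^ k) 0) := by
        rw [formPerm_range_pow_apply_zero hk]
    _ = ((range N).formPerm ^ k) (((range N).formPerm ^ j) 0) := by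
        simp only [← Equiv.Perm.mul_apply, ← pow_add, add_comm]
    _ = ((range N).formPerm ^ k) j := by rw [formPerm_range_pow_apply_zero hj]

end List

theorem card_filter_exists_le_sum_formPerm_pow_mul_le {N : ℕ} {x : ℕ → ℝ}
    (hx : ∀ k ∈ range N, 0 ≤ x k) (c : ℝ) :
    #{j ∈ range N | ∃ n ∈ Icc (1 : ℕ) N,
        n * c ≤ ∑ k ∈ range n, x (((List.range N).formPerm ^ j) k)} * c ≤
      ∑ k ∈ range N, x k := by
  set σ := (List.range N).formPerm
  have hσ : {a | σ a ≠ a} ⊆ (range N : Set ℕ) := fun a ha ↦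
    mem_range.2 (not_le.1 fun h ↦ ha (List.formPerm_range_apply_of_le h))
  refine le_of_eq_of_le ?_ (σ.card_filter_nsmul_le_sum hσ hx c N)
  rw [nsmul_eq_mul]
  congr 3
  refine filter_congr fun j hj ↦ exists_congr fun n ↦ and_congr_right fun hn ↦ ?_
  rw [nsmul_eq_mul, birkhoffSum]
  refine Iff.of_eq (congrArg _ (sum_congr rfl fun k hk ↦ ?_))
  have hkN : k < N := by
    simp only [mem_Icc, mem_range] at hn hk
    omega
  rw [Equiv.Perm.iterate_eq_pow, List.formPerm_range_pow_apply_comm (mem_range.1 hj) hkN]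

end Rotation

section Median

variable {K : ℕ} (c : Fin K → ℝ)

theorem medianOf_eq_apply_sort (hK : 0 < K) :
    medianOf c = c (Tuple.sort c ⟨(K + 1) / 2 - 1, by omega⟩) := by
  have hsort :
      Multiset.sort (Multiset.ofList (List.ofFn c)) (· ≤ ·) = List.ofFn (c ∘ Tuple.sort c) :=
    List.Perm.eq_of_sortedLE (by rw [Multiset.coe_sort]; exact List.sortedLE_mergeSort)
      (Tuple.monotone_sort c).sortedLE_ofFn
      ((Multiset.coe_eq_coe.1 (Multiset.sort_eq _ _)).trans ((Tuple.sort c).ofFn_comp_perm c).symm)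
  rw [medianOf, hsort, List.getD_eq_getElem _ _ (by simp; omega), List.getElem_ofFn]
  rfl

theorem card_sub_le_card_filter_apply_sort_le (j : Fin K) :
    K - j ≤ #{i | c (Tuple.sort c j) ≤ c i} := by
  rw [← Fin.card_Ici]
  exact card_le_card_of_injOn (Tuple.sort c)
    (fun i hi ↦ by simpa using Tuple.monotone_sort c (mem_Ici.1 hi)) (Tuple.sort c).injective.injOn

theorem le_card_filter_le_apply_sort (j : Fin K) :
    j + 1 ≤ #{i | c i ≤ c (Tuple.sort c j)} := by
  rw [← Fin.card_Iic]
  exact card_le_card_of_injOn (Tuple.sort c)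
    (fun i hi ↦ by simpa using Tuple.monotone_sort c (mem_Iic.1 hi)) (Tuple.sort c).injective.injOn

theorem le_two_mul_card_filter_medianOf_le : K ≤ 2 * #{i | medianOf c ≤ c i} := by
  rcases Nat.eq_zero_or_pos K with rfl | hK
  · exact Nat.zero_le _
  have hcard := card_sub_le_card_filter_apply_sort_le c ⟨(K + 1) / 2 - 1, by omega⟩
  rw [medianOf_eq_apply_sort c hK]
  dsimp only at hcard
  omega

theorem le_two_mul_card_filter_le_medianOf : K ≤ 2 * #{i | c i ≤ medianOf c} := by
  rcases Nat.eq_zero_or_pos K with rfl | hK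
  · exact Nat.zero_le _
  have hcard := le_card_filter_le_apply_sort c ⟨(K + 1) / 2 - 1, by omega⟩
  rw [medianOf_eq_apply_sort c hK]
  dsimp only at hcard
  omega

theorem le_two_mul_card_filter_of_le_abs_medianOf_sub {x ε : ℝ} (h : ε ≤ |medianOf c - x|) :
    K ≤ 2 * #{i | ε ≤ |c i - x|} := by
  rcases le_abs'.1 h with h | h
  · refine (le_two_mul_card_filter_le_medianOf c).trans
      (Nat.mul_le_mul_left 2 (card_le_card (monotone_filter_right _ fun i _ hi ↦ ?_)))
    exact (neg_le_abs _).trans' (by linarith)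
  · refine (le_two_mul_card_filter_medianOf_le c).trans
      (Nat.mul_le_mul_left 2 (card_le_card (monotone_filter_right _ fun i _ hi ↦ ?_)))
    exact (le_abs_self _).trans' (by linarith)

theorem le_two_mul_sum_indicator_of_le_abs_medianOf_sub {x : ℕ → ℝ} {μ₀ ε : ℝ}
    (h : ε ≤ |medianOf (fun i : Fin K ↦ x i) - μ₀|) :
    (K : ℝ) ≤ 2 * ∑ k ∈ range K, {y | ε ≤ |y - μ₀|}.indicator 1 (x k) := by
  have hsum : ∑ k ∈ range K, {y | ε ≤ |y - μ₀|}.indicator 1 (x k) =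
      (#{i : Fin K | ε ≤ |x i - μ₀|} : ℝ) := by
    rw [← Fin.sum_univ_eq_sum_range (fun k ↦ {y | ε ≤ |y - μ₀|}.indicator 1 (x k)), ← sum_boole]
    simp [Set.indicator_apply]
  rw [hsum]
  exact_mod_cast le_two_mul_card_filter_of_le_abs_medianOf_sub _ h

end Median

section Exchangeable

variable {Ω β : Type*} [MeasurableSpace Ω] [MeasurableSpace β]

def IsExchangeable (X : ℕ → Ω → β) (μ : Measure Ω) : Prop :=
  ∀ e : Equiv.Perm ℕ, (∃ n, ∀ m ≥ n, e m = m) →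
    μ.map (fun ω k ↦ X (e k) ω) = μ.map (fun ω k ↦ X k ω)

variable {μ : Measure Ω}

theorem IsExchangeable.comp {γ : Type*} [MeasurableSpace γ] {X : ℕ → Ω → β}
    (hX : IsExchangeable X μ) (hXm : ∀ k, Measurable (X k)) {g : β → γ} (hg : Measurable g) :
    IsExchangeable (fun k ω ↦ g (X k ω)) μ := by
  intro e he
  have hg' : Measurable fun (y : ℕ → β) (k : ℕ) ↦ g (y k) := by fun_prop
  calc μ.map (fun ω k ↦ g (X (e k) ω))
      = (μ.map fun ω k ↦ X (e k) ω).map fun y k ↦ g (y k) :=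
        (Measure.map_map hg' (by fun_prop)).symm
    _ = (μ.map fun ω k ↦ X k ω).map fun y k ↦ g (y k) := by rw [hX e he]
    _ = μ.map (fun ω k ↦ g (X k ω)) := Measure.map_map hg' (by fun_prop)

theorem IsExchangeable.measure_preimage_perm {X : ℕ → Ω → β} (hX : IsExchangeable X μ)
    (hXm : ∀ k, Measurable (X k)) {e : Equiv.Perm ℕ} (he : ∃ n, ∀ m ≥ n, e m = m)
    {B : Set (ℕ → β)} (hB : MeasurableSet B) :
    μ ((fun ω k ↦ X (e k) ω) ⁻¹' B) = μ ((fun ω k ↦ X k ω) ⁻¹' B) := by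
  rw [← Measure.map_apply (by fun_prop) hB, hX e he, Measure.map_apply (by fun_prop) hB]

theorem lintegral_ofReal_indicator_one_comp {f : Ω → ℝ} (hf : Measurable f) {S : Set ℝ}
    (hS : MeasurableSet S) :
    ∫⁻ ω, ENNReal.ofReal (S.indicator 1 (f ω)) ∂μ = μ (f ⁻¹' S) := by
  rw [← lintegral_indicator_one (hf hS)]
  congr with ω
  by_cases h : f ω ∈ S <;> simp [h]

theorem IsExchangeable.ofReal_mul_measure_exists_mem_Icc_le {X : ℕ → Ω → ℝ}
    (hX : IsExchangeable X μ) (hXm : ∀ k, Measurable (X k)) (hX₀ : ∀ k ω, 0 ≤ X k ω)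
    {b : ℝ≥0∞} (hb : ∀ k, ∫⁻ ω, ENNReal.ofReal (X k ω) ∂μ ≤ b) (c : ℝ) (N : ℕ) :
    ENNReal.ofReal c * μ {ω | ∃ n ∈ Icc 1 N, n * c ≤ ∑ k ∈ range n, X k ω} ≤ b := by
  classical
  rcases Nat.eq_zero_or_pos N with rfl | hN
  · simp
  set σ := (List.range N).formPerm
  let A (j : ℕ) : Set Ω :=
    {ω | ∃ n ∈ Icc 1 N, n * c ≤ ∑ k ∈ range n, X ((σ ^ j) k) ω}
  have hB : MeasurableSet {x : ℕ → ℝ | ∃ n ∈ Icc 1 N, n * c ≤ ∑ k ∈ range n, x k} := by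
    measurability
  have hA_meas (j : ℕ) : MeasurableSet (A j) := (measurable_pi_lambda _ fun k ↦ hXm _) hB
  have hA_measure (j : ℕ) :
      μ (A j) = μ {ω | ∃ n ∈ Icc 1 N, n * c ≤ ∑ k ∈ range n, X k ω} :=
    hX.measure_preimage_perm hXm ⟨N, fun m hm ↦ Equiv.Perm.pow_apply_eq_self_of_apply_eq_self
      (List.formPerm_range_apply_of_le hm) j⟩ hB
  have hcount (ω : Ω) : ∑ j ∈ range N, (A j).indicator (fun _ ↦ ENNReal.ofReal c) ω ≤
      ∑ k ∈ range N, ENNReal.ofReal (X k ω) :=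
    calc ∑ j ∈ range N, (A j).indicator (fun _ ↦ ENNReal.ofReal c) ω
        = ENNReal.ofReal (#{j ∈ range N | ω ∈ A j} * c) := by
          rw [ENNReal.ofReal_mul (Nat.cast_nonneg _), ENNReal.ofReal_natCast, ← nsmul_eq_mul,
            ← sum_const, sum_filter]
          simp only [Set.indicator_apply]
      _ ≤ ENNReal.ofReal (∑ k ∈ range N, X k ω) := ENNReal.ofReal_le_ofReal
          (card_filter_exists_le_sum_formPerm_pow_mul_le (fun k _ ↦ hX₀ k ω) c)
      _ = ∑ k ∈ range N, ENNReal.ofReal (X k ω) :=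
          ENNReal.ofReal_sum_of_nonneg fun k _ ↦ hX₀ k ω
  have hN' : (N : ℝ≥0∞) ≠ 0 := by exact_mod_cast hN.ne'
  refine (ENNReal.mul_le_mul_iff_right hN' (ENNReal.natCast_ne_top N)).1 ?_
  calc N * (ENNReal.ofReal c * μ {ω | ∃ n ∈ Icc 1 N, n * c ≤ ∑ k ∈ range n, X k ω})
      = ∑ j ∈ range N, ∫⁻ ω, (A j).indicator (fun _ ↦ ENNReal.ofReal c) ω ∂μ := by
        simp only [lintegral_indicator_const (hA_meas _), hA_measure, sum_const, card_range,
          nsmul_eq_mul]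
    _ = ∫⁻ ω, ∑ j ∈ range N, (A j).indicator (fun _ ↦ ENNReal.ofReal c) ω ∂μ :=
        (lintegral_finsetSum _ fun j _ ↦ measurable_const.indicator (hA_meas j)).symm
    _ ≤ ∫⁻ ω, ∑ k ∈ range N, ENNReal.ofReal (X k ω) ∂μ := lintegral_mono hcount
    _ = ∑ k ∈ range N, ∫⁻ ω, ENNReal.ofReal (X k ω) ∂μ :=
        lintegral_finsetSum _ fun k _ ↦ (hXm k).ennreal_ofReal
    _ ≤ N * b := by simpa using sum_le_sum fun k (_ : k ∈ range N) ↦ hb k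

theorem IsExchangeable.ofReal_mul_measure_exists_le_sum_le {X : ℕ → Ω → ℝ}
    (hX : IsExchangeable X μ) (hXm : ∀ k, Measurable (X k)) (hX₀ : ∀ k ω, 0 ≤ X k ω)
    {b : ℝ≥0∞} (hb : ∀ k, ∫⁻ ω, ENNReal.ofReal (X k ω) ∂μ ≤ b) (c : ℝ) :
    ENNReal.ofReal c * μ {ω | ∃ n ≥ 1, n * c ≤ ∑ k ∈ range n, X k ω} ≤ b := by
  have hunion : {ω | ∃ n ≥ 1, n * c ≤ ∑ k ∈ range n, X k ω} =
      ⋃ N, {ω | ∃ n ∈ Icc 1 N, n * c ≤ ∑ k ∈ range n, X k ω} := by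
    ext ω
    simp only [Set.mem_ofPred_eq, Set.mem_iUnion, mem_Icc]
    exact ⟨fun ⟨n, hn, h⟩ ↦ ⟨n, n, ⟨hn, le_rfl⟩, h⟩, fun ⟨_, n, ⟨hn, _⟩, h⟩ ↦ ⟨n, hn, h⟩⟩
  have hmono : Monotone fun N ↦ {ω | ∃ n ∈ Icc 1 N, n * c ≤ ∑ k ∈ range n, X k ω} :=
    fun N M hNM ω ⟨n, hn, h⟩ ↦ ⟨n, Icc_subset_Icc_right hNM hn, h⟩
  rw [hunion, hmono.measure_iUnion, ENNReal.mul_iSup]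
  exact iSup_le (hX.ofReal_mul_measure_exists_mem_Icc_le hXm hX₀ hb c)

end Exchangeable

theorem running_median_time_uniform_general {Ω : Type*} [MeasurableSpace Ω]
    (μ : Measure Ω)
    (μ₀ : ℝ) (ε : ℝ) (β : ℝ)
    (muhat : ℕ → Ω → ℝ)
    (hmeas : ∀ k, Measurable (muhat k))
    (hexch : ∀ e : Equiv.Perm ℕ, (∃ n, ∀ m ≥ n, e m = m) →
      Measure.map (fun ω (k : ℕ) => muhat (e k) ω) μ =
        Measure.map (fun ω (k : ℕ) => muhat k ω) μ)
    (hconc : ∀ k, μ {ω | ε ≤ |muhat k ω - μ₀|} ≤ ENNReal.ofReal β) :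
    μ {ω | ∃ K : ℕ, 1 ≤ K ∧
        ε ≤ |medianOf (fun i : Fin K => muhat i ω) - μ₀|} ≤
      ENNReal.ofReal (2 * β) := by
  let S : Set ℝ := {y | ε ≤ |y - μ₀|}
  have hS : MeasurableSet S := measurableSet_le measurable_const (by fun_prop)
  have hind : Measurable (S.indicator (1 : ℝ → ℝ)) := measurable_one.indicator hS
  let φ (k : ℕ) (ω : Ω) : ℝ := S.indicator 1 (muhat k ω)
  have hmarkov :=
    (IsExchangeable.comp (X := muhat) hexch hmeas hind).ofReal_mul_measure_exists_le_sum_le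
      (fun k ↦ hind.comp (hmeas k)) (fun k ω ↦ Set.indicator_nonneg (by simp) _)
      (fun k ↦ (lintegral_ofReal_indicator_one_comp (hmeas k) hS).trans_le (hconc k)) 2⁻¹
  have hmedian : {ω | ∃ K : ℕ, 1 ≤ K ∧ ε ≤ |medianOf (fun i : Fin K => muhat i ω) - μ₀|} ⊆
      {ω | ∃ n ≥ 1, n * 2⁻¹ ≤ ∑ k ∈ range n, φ k ω} := fun ω ⟨K, hK, hfar⟩ ↦
    ⟨K, hK, by linarith [le_two_mul_sum_indicator_of_le_abs_medianOf_sub (x := (muhat · ω)) hfar]⟩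
  calc _ ≤ μ {ω | ∃ n ≥ 1, n * 2⁻¹ ≤ ∑ k ∈ range n, φ k ω} := measure_mono hmedian
    _ = ENNReal.ofReal 2 *
          (ENNReal.ofReal 2⁻¹ * μ {ω | ∃ n ≥ 1, n * 2⁻¹ ≤ ∑ k ∈ range n, φ k ω}) := by
        rw [← mul_assoc, ← ENNReal.ofReal_mul zero_le_two]
        norm_num
    _ ≤ ENNReal.ofReal 2 * ENNReal.ofReal β := by gcongr
    _ = ENNReal.ofReal (2 * β) := (ENNReal.ofReal_mul zero_le_two).symm

/-- Time-uniform derandomization: for an exchangeable sequence of estimators each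
within `ε` of `μ₀` except with probability `β`, the running medians `m_K` satisfy
`P(∃ K ≥ 1, |m_K - μ₀| ≥ ε) ≤ 2β`. -/
theorem running_median_time_uniform {Ω : Type*} [MeasurableSpace Ω]
    (μ : Measure Ω) [IsProbabilityMeasure μ]
    (μ₀ : ℝ) (ε : ℝ) (hε : 0 < ε) (β : ℝ) (hβ0 : 0 ≤ β) (hβ1 : β ≤ 1)
    (muhat : ℕ → Ω → ℝ)
    (hmeas : ∀ k, Measurable (muhat k))
    (hexch : ∀ e : Equiv.Perm ℕ, (∃ n, ∀ m ≥ n, e m = m) →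
      Measure.map (fun ω (k : ℕ) => muhat (e k) ω) μ =
        Measure.map (fun ω (k : ℕ) => muhat k ω) μ)
    (hconc : ∀ k, μ {ω | ε ≤ |muhat k ω - μ₀|} ≤ ENNReal.ofReal β) :
    μ {ω | ∃ K : ℕ, 1 ≤ K ∧
        ε ≤ |medianOf (fun i : Fin K => muhat i ω) - μ₀|} ≤
      ENNReal.ofReal (2 * β) :=
  running_median_time_uniform_general μ μ₀ ε β muhat hmeas hexch hconc
end

section
/- Let $\mathcal{L}: 2^{\mathcal{Y}} \times \mathcal{Y} \to [0,B]$ be a bounded loss with $\mathcal{L}(\mathcal{C}, y) = 0$ whenever $y \in \mathcal{C}$. Let $\mathcal{C}_1(X),\dots,\mathcal{C}_K(X)$ be random sets satisfying $\mathbb{E}[\mathcal{L}(\mathcal{C}_k(X), Y)] \le \alpha$ for each $k$, and define $\mathcal{C}^M(x) = \{y : \frac{1}{K}\sum_{k=1}^K \mathcal{L}(\mathcal{C}_k(x), y) < B/2\}$. Then $\mathbb{E}[\mathcal{L}(\mathcal{C}^M(X), Y)] \le 2\alpha$. -/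
open MeasureTheory

/-- Majority vote for conformal risk control: for a bounded loss
`L : Set Y → Y → [0, B]` vanishing when the target is in the set, if each random set
`C k (X)` has risk at most `α`, then the majority-vote set
`C^M(x) = {y : (1/K) ∑ L(C k x, y) < B/2}` has risk at most `2α`. -/
theorem majority_vote_risk_control {Ω 𝒳 𝒴 : Type*} [MeasurableSpace Ω]
    (μ : Measure Ω) [IsProbabilityMeasure μ]
    (B : ℝ) (hB : 0 < B) (α : ℝ) (hα0 : 0 < α) (hαB : α < B)
    (K : ℕ) (hK : 2 ≤ K)
    (L : Set 𝒴 → 𝒴 → ℝ)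
    (hL0 : ∀ C y, 0 ≤ L C y) (hLB : ∀ C y, L C y ≤ B)
    (hLzero : ∀ (C : Set 𝒴) (y : 𝒴), y ∈ C → L C y = 0)
    (X : Ω → 𝒳) (Y : Ω → 𝒴)
    (C : Fin K → 𝒳 → Set 𝒴)
    (hint : ∀ k, Integrable (fun ω => L (C k (X ω)) (Y ω)) μ)
    (hrisk : ∀ k, ∫ ω, L (C k (X ω)) (Y ω) ∂μ ≤ α) :
    ∫ ω, L {y : 𝒴 | (1 / K : ℝ) * ∑ k, L (C k (X ω)) y < B / 2} (Y ω) ∂μ ≤ 2 * α := by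
  have hKpos : (0 : ℝ) < K := by positivity
  set g : Ω → ℝ := fun ω => 2 * ((1 / K : ℝ) * ∑ k, L (C k (X ω)) (Y ω)) with hg
  have hgint : Integrable g μ := by
    apply Integrable.const_mul
    apply Integrable.const_mul
    exact integrable_finset_sum _ fun k _ => hint k
  have hptwise : ∀ ω, L {y : 𝒴 | (1 / K : ℝ) * ∑ k, L (C k (X ω)) y < B / 2} (Y ω) ≤ g ω := by
    intro ω
    by_cases h : (1 / K : ℝ) * ∑ k, L (C k (X ω)) (Y ω) < B / 2
    · rw [hLzero _ _ h]
      simp only [hg]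
      have : (0:ℝ) ≤ ∑ k, L (C k (X ω)) (Y ω) :=
        Finset.sum_nonneg fun k _ => hL0 _ _
      positivity
    · push_neg at h
      calc L {y : 𝒴 | (1 / K : ℝ) * ∑ k, L (C k (X ω)) y < B / 2} (Y ω) ≤ B := hLB _ _
        _ ≤ g ω := by simp only [hg]; linarith
  have h1 : ∫ ω, L {y : 𝒴 | (1 / K : ℝ) * ∑ k, L (C k (X ω)) y < B / 2} (Y ω) ∂μ
      ≤ ∫ ω, g ω ∂μ :=
    integral_mono_of_nonneg (Filter.Eventually.of_forall fun ω => hL0 _ _) hgint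
      (Filter.Eventually.of_forall hptwise)
  have h2 : ∫ ω, g ω ∂μ ≤ 2 * α := by
    have : ∫ ω, g ω ∂μ = 2 * ((1 / K : ℝ) * ∑ k, ∫ ω, L (C k (X ω)) (Y ω) ∂μ) := by
      simp only [hg]
      rw [integral_const_mul, integral_const_mul,
        integral_finset_sum _ fun k _ => hint k]
    rw [this]
    have hsum : ∑ k, ∫ ω, L (C k (X ω)) (Y ω) ∂μ ≤ K * α := by
      calc ∑ k : Fin K, ∫ ω, L (C k (X ω)) (Y ω) ∂μ ≤ ∑ k : Fin K, α :=
        Finset.sum_le_sum fun k _ => hrisk k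
        _ = K * α := by simp [mul_comm]
    have h3 : (1 / K : ℝ) * ∑ k, ∫ ω, L (C k (X ω)) (Y ω) ∂μ ≤ α := by
      calc (1 / K : ℝ) * ∑ k, ∫ ω, L (C k (X ω)) (Y ω) ∂μ
          ≤ (1 / K : ℝ) * (K * α) := by
            apply mul_le_mul_of_nonneg_left hsum; positivity
        _ = α := by field_simp
    linarith
  linarith
end

section
/- Let $\Lambda \subseteq \mathbb{R}^d$, let $w: \Lambda \to [0,\infty)$ with $\int_\Lambda w(\lambda)\,d\lambda = 1$, and for each $\lambda \in \Lambda$ let $\phi_\lambda$ be a Bernoulli random variable with $\mathbb{E}[\phi_\lambda] \le \alpha$, jointly measurable in $\lambda$. Let $U \sim \mathrm{Unif}(0,1)$ be independent of everything. Then $\mathbb{P}\left(\int_\Lambda w(\lambda)\,\phi_\lambda\, d\lambda \ge \frac{1-U}{2}\right) \le 2\alpha$. -/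
/-!
Write `X ω = ∫_Λ w(λ) φ_λ(ω) dλ`. Since `0 ≤ φ ≤ 1` and `∫_Λ w = 1`, Fubini gives `𝔼[X] ≤ α`.
Conditionally on `X = x`, the event `X ≥ (1 - U)/2` is `U ≥ 1 - 2x`, of probability at most `2x`
because `U` is uniform and independent of `X`; integrating over `x` yields `2 𝔼[X] ≤ 2α`.
-/

open MeasureTheory ProbabilityTheory Set

lemma volume_Icc_zero_one_Ici_one_sub_le (t : ℝ) :
    volume.restrict (Icc (0 : ℝ) 1) (Ici (1 - t)) ≤ ENNReal.ofReal t := by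
  rw [Measure.restrict_apply measurableSet_Ici]
  calc volume (Ici (1 - t) ∩ Icc 0 1) ≤ volume (Icc (1 - t) 1) :=
        measure_mono fun u ⟨hu, _, hu1⟩ => ⟨hu, hu1⟩
    _ = ENNReal.ofReal t := by rw [Real.volume_Icc, sub_sub_cancel]

/-- Markov's inequality with a uniformly randomized threshold. -/
theorem measure_one_sub_uniform_div_le {Ω : Type*} [MeasurableSpace Ω] {μ : Measure Ω}
    [IsFiniteMeasure μ] {X U : Ω → ℝ} (hX : Integrable X μ) (hX0 : 0 ≤ᵐ[μ] X)
    (hU : Measurable U) (hUunif : μ.map U = volume.restrict (Icc (0 : ℝ) 1))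
    (hindep : IndepFun U X μ) {a : ℝ} (ha : 0 < a) :
    μ {ω | (1 - U ω) / a ≤ X ω} ≤ ENNReal.ofReal (a * ∫ ω, X ω ∂μ) := by
  set S : Set (ℝ × ℝ) := {p | (1 - p.2) / a ≤ p.1}
  have hS : MeasurableSet S := measurableSet_le (by fun_prop) (by fun_prop)
  have hslice (x : ℝ) : Prod.mk x ⁻¹' S = Ici (1 - a * x) := by
    ext u
    simp only [S, mem_preimage, mem_ofPred_eq, mem_Ici, div_le_iff₀ ha]
    constructor <;> intro h <;> linarith
  have hXU : μ.map (fun ω => (X ω, U ω)) = (μ.map X).prod (μ.map U) :=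
    (indepFun_iff_map_prod_eq_prod_map_map hX.aemeasurable hU.aemeasurable).1 hindep.symm
  calc μ {ω | (1 - U ω) / a ≤ X ω} = (μ.map X).prod (μ.map U) S := by
        rw [← hXU, Measure.map_apply_of_aemeasurable
          (hX.aemeasurable.prodMk hU.aemeasurable) hS]
        rfl
    _ = ∫⁻ x, volume.restrict (Icc (0 : ℝ) 1) (Ici (1 - a * x)) ∂(μ.map X) := by
        simp only [Measure.prod_apply hS, hslice, hUunif]
    _ ≤ ∫⁻ x, ENNReal.ofReal (a * x) ∂(μ.map X) :=
        lintegral_mono fun x => volume_Icc_zero_one_Ici_one_sub_le _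
    _ = ∫⁻ ω, ENNReal.ofReal (a * X ω) ∂μ := lintegral_map' (by fun_prop) hX.aemeasurable
    _ = ENNReal.ofReal (a * ∫ ω, X ω ∂μ) := by
        rw [← integral_const_mul, ofReal_integral_eq_lintegral_ofReal (hX.const_mul a)]
        filter_upwards [hX0] with ω hω using mul_nonneg ha.le hω

section WeightedAverage

variable {α Ω : Type*} [MeasurableSpace α] [MeasurableSpace Ω]
  {ν : Measure α} {μ : Measure Ω} {w : α → ℝ} {φ : α → Ω → ℝ}

lemma MeasureTheory.Integrable.prod_mul_of_norm_le_one [SFinite ν] [IsFiniteMeasure μ]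
    (hw : Integrable w ν)
    (hφ : AEStronglyMeasurable (fun p : α × Ω => φ p.1 p.2) (ν.prod μ))
    (hφ1 : ∀ᵐ l ∂ν, ∀ ω, ‖φ l ω‖ ≤ 1) :
    Integrable (fun p : α × Ω => w p.1 * φ p.1 p.2) (ν.prod μ) := by
  refine (hw.comp_fst μ).mono (hw.aestronglyMeasurable.comp_fst.mul hφ) ?_
  filter_upwards [Measure.quasiMeasurePreserving_fst.ae hφ1] with p hp
  rw [norm_mul]
  exact mul_le_of_le_one_right (norm_nonneg _) (hp p.2)

lemma integral_integral_mul_le [SFinite ν] [IsFiniteMeasure μ] (hw : Integrable w ν)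
    (hw0 : 0 ≤ᵐ[ν] w) (hφ : AEStronglyMeasurable (fun p : α × Ω => φ p.1 p.2) (ν.prod μ))
    (hφ1 : ∀ᵐ l ∂ν, ∀ ω, ‖φ l ω‖ ≤ 1) {c : ℝ} (hφc : ∀ᵐ l ∂ν, ∫ ω, φ l ω ∂μ ≤ c) :
    ∫ ω, ∫ l, w l * φ l ω ∂ν ∂μ ≤ (∫ l, w l ∂ν) * c := by
  have hF := hw.prod_mul_of_norm_le_one hφ hφ1
  rw [← integral_integral_swap hF, ← integral_mul_const]
  refine integral_mono_ae hF.integral_prod_left (hw.mul_const c) ?_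
  filter_upwards [hw0, hφc] with l hl hlc
  rw [integral_const_mul]
  exact mul_le_mul_of_nonneg_left hlc hl

end WeightedAverage

theorem continuum_randomized_weighted_majority_general {Ω : Type*} [MeasurableSpace Ω]
    (μ : Measure Ω) [IsProbabilityMeasure μ]
    (d : ℕ) (Λ : Set (Fin d → ℝ)) (hΛ : MeasurableSet Λ)
    (α : ℝ)
    (w : (Fin d → ℝ) → ℝ) (hw0 : ∀ l, 0 ≤ w l)
    (hwint : ∫ l in Λ, w l = 1)
    (φ : (Fin d → ℝ) → Ω → ℝ)
    (hmeas : Measurable (fun q : (Fin d → ℝ) × Ω => φ q.1 q.2))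
    (h01 : ∀ l ∈ Λ, ∀ ω, φ l ω = 0 ∨ φ l ω = 1)
    (hexp : ∀ l ∈ Λ, ∫ ω, φ l ω ∂μ ≤ α)
    (U : Ω → ℝ) (hU : Measurable U)
    (hUunif : μ.map U = (volume.restrict (Set.Icc (0 : ℝ) 1)))
    (hindep : IndepFun U (fun ω => ∫ l in Λ, w l * φ l ω) μ) :
    μ {ω | ∫ l in Λ, w l * φ l ω ≥ (1 - U ω) / 2} ≤ ENNReal.ofReal (2 * α) := by
  have hw : Integrable w (volume.restrict Λ) :=
    Integrable.of_integral_ne_zero (by rw [hwint]; exact one_ne_zero)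
  have hφ0 (l : Fin d → ℝ) (hl : l ∈ Λ) (ω : Ω) : 0 ≤ φ l ω := by
    rcases h01 l hl ω with h | h <;> simp [h]
  have hφ1 : ∀ᵐ l ∂volume.restrict Λ, ∀ ω, ‖φ l ω‖ ≤ 1 :=
    ae_restrict_of_forall_mem hΛ fun l hl ω => by rcases h01 l hl ω with h | h <;> simp [h]
  have hX :=
    (hw.prod_mul_of_norm_le_one (μ := μ) hmeas.aestronglyMeasurable hφ1).integral_prod_right
  have hX0 : 0 ≤ᵐ[μ] fun ω => ∫ l in Λ, w l * φ l ω := ae_of_all _ fun ω =>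
    setIntegral_nonneg hΛ fun l hl => mul_nonneg (hw0 l) (hφ0 l hl ω)
  have hEX : ∫ ω, (∫ l in Λ, w l * φ l ω) ∂μ ≤ α := by
    simpa [hwint] using integral_integral_mul_le hw (ae_of_all _ hw0)
      hmeas.aestronglyMeasurable hφ1 (ae_restrict_of_forall_mem hΛ hexp)
  calc μ {ω | ∫ l in Λ, w l * φ l ω ≥ (1 - U ω) / 2}
      ≤ ENNReal.ofReal (2 * ∫ ω, (∫ l in Λ, w l * φ l ω) ∂μ) :=
        measure_one_sub_uniform_div_le hX hX0 hU hUunif hindep two_pos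
    _ ≤ ENNReal.ofReal (2 * α) := ENNReal.ofReal_le_ofReal (by linarith)

/-- Continuum randomized weighted majority vote: for a jointly measurable family of
Bernoulli random variables `φ λ` (indexed by `λ ∈ Λ ⊆ ℝ^d`) each with mean at most
`α`, a nonnegative weight function `w` integrating to 1 over `Λ`, and an independent
uniform `U` on `[0,1]`, we have `P(∫_Λ w(λ) φ_λ dλ ≥ (1-U)/2) ≤ 2α`. -/
theorem continuum_randomized_weighted_majority {Ω : Type*} [MeasurableSpace Ω]
    (μ : Measure Ω) [IsProbabilityMeasure μ]
    (d : ℕ) (Λ : Set (Fin d → ℝ)) (hΛ : MeasurableSet Λ)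
    (α : ℝ) (hα0 : 0 ≤ α) (hα1 : α ≤ 1)
    (w : (Fin d → ℝ) → ℝ) (hw0 : ∀ l, 0 ≤ w l)
    (hwint : ∫ l in Λ, w l = 1)
    (φ : (Fin d → ℝ) → Ω → ℝ)
    (hmeas : Measurable (fun q : (Fin d → ℝ) × Ω => φ q.1 q.2))
    (h01 : ∀ l ∈ Λ, ∀ ω, φ l ω = 0 ∨ φ l ω = 1)
    (hexp : ∀ l ∈ Λ, ∫ ω, φ l ω ∂μ ≤ α)
    (U : Ω → ℝ) (hU : Measurable U)
    (hUunif : μ.map U = (volume.restrict (Set.Icc (0 : ℝ) 1)))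
    (hindep : IndepFun U (fun ω => ∫ l in Λ, w l * φ l ω) μ) :
    μ {ω | ∫ l in Λ, w l * φ l ω ≥ (1 - U ω) / 2} ≤ ENNReal.ofReal (2 * α) :=
  continuum_randomized_weighted_majority_general μ d Λ hΛ α w hw0 hwint φ hmeas h01 hexp U hU hUunif
    hindep
end
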